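/- arXiv:0711.0570 — 8 statements merged into one kernel-verified Lean document; each statement's English description precedes it below -/
import Mathlib

section
/- Let B(z) = A + (z − z₁)⁻¹ • (p·q†) be an elementary divisor with pole z₁ and zero ζ₁, whose rank-one part is the outer product of a nonzero column vector p and a nonzero row vector q†. Let z ≠ z₁ be a complex number and let w, v be column vectors in ℂʳ with v = B(z)·w. If the scalars q†·w and q†·A⁻¹·v are both nonzero, then the rank-one part is recovered as p·q† = A · ((z₁ − z)·(q†·w)⁻¹ • w + (z − ζ₁)·(q†·A⁻¹·v)⁻¹ • (A⁻¹·v)) · q†. -/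
open Matrix

/-!
Put `α = q†w` and `γ = (z - z₁)⁻¹ α`. Applying `A⁻¹` to `v = B(z) w` gives
`A⁻¹v = w + γ • A⁻¹p`, hence `q†A⁻¹v = α + γ (z₁ - ζ₁) = γ (z - ζ₁)`, because
`q†A⁻¹p = tr(p q† A⁻¹) = z₁ - ζ₁`. So the two coefficients of the formula are `-γ⁻¹` and
`γ⁻¹`, the bracket equals `γ⁻¹ • (A⁻¹v - w) = A⁻¹p`, and `A (A⁻¹p) q† = p q†`.
-/

namespace Matrix

variable {m R : Type*}

theorem mul_fin_one_eq_smul [CommSemiring R] (x : Matrix m (Fin 1) R)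
    (M : Matrix (Fin 1) (Fin 1) R) : x * M = M 0 0 • x := by
  ext i j
  simp [mul_apply, Subsingleton.elim j 0, mul_comm]

theorem trace_mul_mul_fin_one [Fintype m] [CommSemiring R] (p : Matrix m (Fin 1) R)
    (q : Matrix (Fin 1) m R) (B : Matrix m m R) : (p * q * B).trace = (q * B * p) 0 0 := by
  rw [Matrix.mul_assoc, trace_mul_comm, trace_fin_one]

variable [Fintype m] [DecidableEq m] [Field R]

theorem inv_mul_rankOne_perturbation_mul {A : Matrix m m R} (hA : IsUnit A.det)
    (p : Matrix m (Fin 1) R) (q : Matrix (Fin 1) m R) (c : R) (w : Matrix m (Fin 1) R) :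
    A⁻¹ * ((A + c • (p * q)) * w) = w + (c * (q * w) 0 0) • (A⁻¹ * p) := by
  rw [Matrix.add_mul, Matrix.mul_add, ← Matrix.mul_assoc, nonsing_inv_mul A hA, Matrix.one_mul,
    Matrix.smul_mul, Matrix.mul_smul, Matrix.mul_assoc, mul_fin_one_eq_smul p,
    Matrix.mul_smul, smul_smul]

end Matrix

theorem elementary_divisor_recover_column_general
    (r : ℕ)
    (A : Matrix (Fin r) (Fin r) ℂ) (hA : IsUnit A.det)
    (p : Matrix (Fin r) (Fin 1) ℂ) (q : Matrix (Fin 1) (Fin r) ℂ)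
    (z₁ ζ₁ : ℂ) (hζ : (p * q * A⁻¹).trace = z₁ - ζ₁)
    (z : ℂ) (hz : z ≠ z₁)
    (w v : Matrix (Fin r) (Fin 1) ℂ)
    (hv : v = (A + (z - z₁)⁻¹ • (p * q)) * w)
    (h1 : (q * w) 0 0 ≠ 0) (h2 : (q * A⁻¹ * v) 0 0 ≠ 0) :
    p * q = A * (((z₁ - z) * ((q * w) 0 0)⁻¹) • w
      + ((z - ζ₁) * ((q * A⁻¹ * v) 0 0)⁻¹) • (A⁻¹ * v)) * q := by
  set α := (q * w) 0 0
  set γ := (z - z₁)⁻¹ * α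
  have hz' : z - z₁ ≠ 0 := sub_ne_zero.mpr hz
  have hAv : A⁻¹ * v = w + γ • (A⁻¹ * p) :=
    hv ▸ inv_mul_rankOne_perturbation_mul hA p q _ w
  have hβ : (q * A⁻¹ * v) 0 0 = γ * (z - ζ₁) := by
    have hβ_expand : (q * A⁻¹ * v) 0 0 = α + γ * (z₁ - ζ₁) := by
      rw [← hζ, trace_mul_mul_fin_one, Matrix.mul_assoc, hAv, Matrix.mul_add, Matrix.mul_smul,
        ← Matrix.mul_assoc, Matrix.add_apply, Matrix.smul_apply, smul_eq_mul]
    have hα : α = γ * (z - z₁) := by simp only [γ]; field_simp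
    rw [hβ_expand, hα]
    ring
  have hc₁ : (z₁ - z) * α⁻¹ = -γ⁻¹ := by simp only [γ, mul_inv, inv_inv]; ring
  have hc₂ : (z - ζ₁) * ((q * A⁻¹ * v) 0 0)⁻¹ = γ⁻¹ := by
    rw [hβ] at h2 ⊢
    field_simp [right_ne_zero_of_mul h2]
  have hγ : γ ≠ 0 := mul_ne_zero (inv_ne_zero hz') h1
  have hbracket : -γ⁻¹ • w + γ⁻¹ • (A⁻¹ * v) = A⁻¹ * p := by
    rw [hAv, smul_add, smul_smul, inv_mul_cancel₀ hγ, one_smul, neg_smul, neg_add_cancel_left]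
  rw [hc₁, hc₂, hbracket, ← Matrix.mul_assoc, mul_nonsing_inv A hA, Matrix.one_mul]

/-- Recovering the rank-one part of an elementary divisor from its action on a
column vector: if `v = B(z) w` with `B(z) = A + (z - z₁)⁻¹ • (p·q†)`, then
`p·q† = A ((z₁ - z)(q†w)⁻¹ • w + (z - ζ₁)(q†A⁻¹v)⁻¹ • (A⁻¹v)) q†`. -/
theorem elementary_divisor_recover_column
    (r : ℕ) (hr : 1 ≤ r)
    (A : Matrix (Fin r) (Fin r) ℂ) (hA : IsUnit A.det)
    (p : Matrix (Fin r) (Fin 1) ℂ) (q : Matrix (Fin 1) (Fin r) ℂ)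
    (hp : p ≠ 0) (hq : q ≠ 0)
    (z₁ ζ₁ : ℂ) (hζ : (p * q * A⁻¹).trace = z₁ - ζ₁)
    (z : ℂ) (hz : z ≠ z₁)
    (w v : Matrix (Fin r) (Fin 1) ℂ)
    (hv : v = (A + (z - z₁)⁻¹ • (p * q)) * w)
    (h1 : (q * w) 0 0 ≠ 0) (h2 : (q * A⁻¹ * v) 0 0 ≠ 0) :
    p * q = A * (((z₁ - z) * ((q * w) 0 0)⁻¹) • w
      + ((z - ζ₁) * ((q * A⁻¹ * v) 0 0)⁻¹) • (A⁻¹ * v)) * q :=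
  elementary_divisor_recover_column_general r A hA p q z₁ ζ₁ hζ z hz w v hv h1 h2
end

section
/- Let B(z) = A + (z − z₁)⁻¹ • (p·q†) be an elementary divisor with pole z₁ and zero ζ₁, whose rank-one part is the outer product of a nonzero column vector p and a nonzero row vector q†. Let z ≠ z₁ be a complex number and let w†, v† be row vectors with v† = w†·B(z). If the scalars w†·p and v†·A⁻¹·p are both nonzero, then the rank-one part is recovered as p·q† = p · ((z₁ − z)·(w†·p)⁻¹ • w† + (z − ζ₁)·(v†·A⁻¹·p)⁻¹ • (v†·A⁻¹)) · A. -/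
/-!
Put `α = w†p`, `s = (z - z₁)⁻¹` and `c = q†A⁻¹p = tr(p q† A⁻¹) = z₁ - ζ₁`.
Multiplying `v† = w†B(z)` by `A⁻¹` gives `v†A⁻¹ = w† + sα • q†A⁻¹`, hence `q†A⁻¹` is the
combination `(sα)⁻¹ • (v†A⁻¹ - w†)`, and `v†A⁻¹p = α (1 + s c) = α (z - ζ₁)/(z - z₁)`;
this last formula identifies the two coefficients of the theorem with `∓(sα)⁻¹`.
-/

open Matrix

namespace Matrix

variable {K : Type*} [Field K] {n : Type*} [Fintype n]

lemma fin_one_mul_eq_smul {m : Type*} (M : Matrix (Fin 1) (Fin 1) K)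
    (N : Matrix (Fin 1) m K) : M * N = M 0 0 • N := by
  ext i j
  fin_cases i
  simp [mul_apply]

lemma trace_col_mul_row_mul (p : Matrix n (Fin 1) K) (q : Matrix (Fin 1) n K)
    (M : Matrix n n K) : (p * q * M).trace = (q * M * p) 0 0 := by
  rw [Matrix.mul_assoc, trace_mul_comm, trace_fin_one]

variable [DecidableEq n] {A : Matrix n n K} (hA : IsUnit A.det)
  (p : Matrix n (Fin 1) K) (q w : Matrix (Fin 1) n K) (s : K)
include hA

lemma row_mul_add_smul_outer_mul_inv :
    w * (A + s • (p * q)) * A⁻¹ = w + (s * (w * p) 0 0) • (q * A⁻¹) := by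
  rw [Matrix.mul_add, Matrix.add_mul, Matrix.mul_assoc w A, mul_nonsing_inv A hA,
    Matrix.mul_one, Matrix.mul_smul, Matrix.smul_mul, ← Matrix.mul_assoc,
    Matrix.mul_assoc (w * p), fin_one_mul_eq_smul, smul_smul]

lemma row_mul_add_smul_outer_mul_inv_mul_apply :
    (w * (A + s • (p * q)) * A⁻¹ * p) 0 0
      = (w * p) 0 0 * (1 + s * (q * A⁻¹ * p) 0 0) := by
  rw [row_mul_add_smul_outer_mul_inv hA, Matrix.add_mul, Matrix.smul_mul]
  simp only [add_apply, smul_apply, smul_eq_mul]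
  ring

end Matrix

lemma neg_inv_smul_add_inv_smul_of_eq_add_smul {K V : Type*} [Field K] [AddCommGroup V]
    [Module K V] {t : K} (ht : t ≠ 0) {w x y : V} (hy : y = w + t • x) :
    (-t⁻¹) • w + t⁻¹ • y = x := by
  rw [hy, smul_add, smul_smul, inv_mul_cancel₀ ht, one_smul, neg_smul, neg_add_cancel_left]

theorem elementary_divisor_recover_row_general
    (r : ℕ)
    (A : Matrix (Fin r) (Fin r) ℂ) (hA : IsUnit A.det)
    (p : Matrix (Fin r) (Fin 1) ℂ) (q : Matrix (Fin 1) (Fin r) ℂ)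
    (z₁ ζ₁ : ℂ) (hζ : (p * q * A⁻¹).trace = z₁ - ζ₁)
    (z : ℂ) (hz : z ≠ z₁)
    (w v : Matrix (Fin 1) (Fin r) ℂ)
    (hv : v = w * (A + (z - z₁)⁻¹ • (p * q)))
    (h1 : (w * p) 0 0 ≠ 0) (h2 : (v * A⁻¹ * p) 0 0 ≠ 0) :
    p * q = p * (((z₁ - z) * ((w * p) 0 0)⁻¹) • w
      + ((z - ζ₁) * ((v * A⁻¹ * p) 0 0)⁻¹) • (v * A⁻¹)) * A := by
  set α := (w * p) 0 0
  have hz' : z - z₁ ≠ 0 := sub_ne_zero.mpr hz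
  have hvA : v * A⁻¹ = w + ((z - z₁)⁻¹ * α) • (q * A⁻¹) := by
    rw [hv, row_mul_add_smul_outer_mul_inv hA]
  have hβ : (v * A⁻¹ * p) 0 0 = α * ((z - ζ₁) / (z - z₁)) := by
    rw [hv, row_mul_add_smul_outer_mul_inv_mul_apply hA, ← trace_col_mul_row_mul, hζ]
    field_simp
    ring
  have hzζ : z - ζ₁ ≠ 0 := fun h ↦ h2 (by rw [hβ, h, zero_div, mul_zero])
  have hcoef₁ : (z₁ - z) * α⁻¹ = -((z - z₁)⁻¹ * α)⁻¹ := by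
    rw [mul_inv, inv_inv, ← neg_mul, neg_sub]
  have hcoef₂ : (z - ζ₁) * ((v * A⁻¹ * p) 0 0)⁻¹ = ((z - z₁)⁻¹ * α)⁻¹ := by
    rw [hβ]
    field_simp
  have hrow : q * A⁻¹ = _ :=
    (neg_inv_smul_add_inv_smul_of_eq_add_smul (mul_ne_zero (inv_ne_zero hz') h1) hvA).symm
  rw [hcoef₁, hcoef₂, ← hrow, Matrix.mul_assoc, Matrix.mul_assoc, nonsing_inv_mul A hA, Matrix.mul_one]

/-- Recovering the rank-one part of an elementary divisor from its action on a
row vector: if `v† = w† B(z)` with `B(z) = A + (z - z₁)⁻¹ • (p·q†)`, then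
`p·q† = p ((z₁ - z)(w†p)⁻¹ • w† + (z - ζ₁)(v†A⁻¹p)⁻¹ • (v†A⁻¹)) A`. -/
theorem elementary_divisor_recover_row
    (r : ℕ) (hr : 1 ≤ r)
    (A : Matrix (Fin r) (Fin r) ℂ) (hA : IsUnit A.det)
    (p : Matrix (Fin r) (Fin 1) ℂ) (q : Matrix (Fin 1) (Fin r) ℂ)
    (hp : p ≠ 0) (hq : q ≠ 0)
    (z₁ ζ₁ : ℂ) (hζ : (p * q * A⁻¹).trace = z₁ - ζ₁)
    (z : ℂ) (hz : z ≠ z₁)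
    (w v : Matrix (Fin 1) (Fin r) ℂ)
    (hv : v = w * (A + (z - z₁)⁻¹ • (p * q)))
    (h1 : (w * p) 0 0 ≠ 0) (h2 : (v * A⁻¹ * p) 0 0 ≠ 0) :
    p * q = p * (((z₁ - z) * ((w * p) 0 0)⁻¹) • w
      + ((z - ζ₁) * ((v * A⁻¹ * p) 0 0)⁻¹) • (v * A⁻¹)) * A :=
  elementary_divisor_recover_row_general r A hA p q z₁ ζ₁ hζ z hz w v hv h1 h2
end

section
/- Under the refactorization identity B₂(z)·B₁(z) = B̃₁(z)·B̃₂(z) for all z ∉ {z₁, z₂}, the zeros match: ζ̃₁ + ζ̃₂ = ζ₁ + ζ₂ and ζ̃₁·ζ̃₂ = ζ₁·ζ₂; consequently either (ζ̃₁, ζ̃₂) = (ζ₁, ζ₂) or (ζ̃₁, ζ̃₂) = (ζ₂, ζ₁). -/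
/-!
For a rank-one `G` the matrix determinant lemma gives
`det (A + c • G) = det A * (1 + c * tr (G * A⁻¹))`, so `det B(z) = det A * (z - ζ) / (z - w)`
for an elementary divisor with pole `w` and zero `ζ`.
Taking determinants of the refactorization identity and cancelling `(det A)²` and the poles gives
`(z - ζ₁)(z - ζ₂) = (z - ζ̃₁)(z - ζ̃₂)` for all `z ∉ {z₁, z₂}`. Comparing two such `z` matches the
sums and products of the zeros, which determine the unordered pair.
-/

open Matrix

namespace Matrix

theorem exists_eq_vecMulVec_of_rank_le_one {K m n : Type*} [Field K] [Fintype n] [DecidableEq n]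
    {G : Matrix m n K} (hG : G.rank ≤ 1) : ∃ (u : m → K) (v : n → K), G = vecMulVec u v := by
  obtain ⟨u, hu⟩ :=
    finrank_le_one_iff.mp (show Module.finrank K (LinearMap.range G.mulVecLin) ≤ 1 from hG)
  choose c hc using hu
  refine ⟨u.1, fun j => c ⟨G *ᵥ Pi.single j 1, Pi.single j 1, rfl⟩, ?_⟩
  ext i j
  have hcol := congr_arg (fun w : LinearMap.range G.mulVecLin => (w : m → K) i)
    (hc ⟨G *ᵥ Pi.single j 1, Pi.single j 1, rfl⟩)
  simp only [SetLike.val_smul, Pi.smul_apply, smul_eq_mul] at hcol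
  rw [vecMulVec_apply, mul_comm, hcol, mulVec_single_one, col_apply]

variable {K n : Type*} [Field K] [Fintype n] [DecidableEq n]

theorem det_one_add_of_rank_le_one {M : Matrix n n K} (hM : M.rank ≤ 1) :
    (1 + M).det = 1 + M.trace := by
  obtain ⟨u, v, rfl⟩ := exists_eq_vecMulVec_of_rank_le_one hM
  rw [vecMulVec_eq Unit, det_one_add_replicateCol_mul_replicateRow, ← vecMulVec_eq,
    trace_vecMulVec, dotProduct_comm]

theorem det_add_smul_of_rank_le_one {A G : Matrix n n K} (hA : IsUnit A.det) (hG : G.rank ≤ 1)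
    (c : K) : (A + c • G).det = A.det * (1 + c * (G * A⁻¹).trace) := by
  have hfactor : A + c • G = (1 + G * (c • A⁻¹)) * A := by
    rw [add_mul, one_mul, Matrix.mul_assoc, smul_mul, nonsing_inv_mul _ hA, Matrix.mul_smul,
      mul_one]
  rw [hfactor, det_mul, det_one_add_of_rank_le_one ((rank_mul_le_left _ _).trans hG), mul_comm,
    Matrix.mul_smul, trace_smul, smul_eq_mul]

theorem det_add_inv_sub_smul {A G : Matrix n n K} (hA : IsUnit A.det) (hG : G.rank ≤ 1)
    {z w ζ : K} (hz : z ≠ w) (hζ : (G * A⁻¹).trace = w - ζ) :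
    (A + (z - w)⁻¹ • G).det = A.det * (z - ζ) / (z - w) := by
  rw [det_add_smul_of_rank_le_one hA hG, hζ]
  field_simp [sub_ne_zero.mpr hz]
  ring

end Matrix

theorem add_eq_add_and_mul_eq_mul_of_sub_mul_sub_eq {R : Type*} [CommRing R] [NoZeroDivisors R]
    {a b x₁ x₂ y₁ y₂ : R} (hab : a ≠ b) (ha : (a - x₁) * (a - x₂) = (a - y₁) * (a - y₂))
    (hb : (b - x₁) * (b - x₂) = (b - y₁) * (b - y₂)) :
    y₁ + y₂ = x₁ + x₂ ∧ y₁ * y₂ = x₁ * x₂ := by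
  have hsum : y₁ + y₂ = x₁ + x₂ := by
    have h : (a - b) * (y₁ + y₂ - (x₁ + x₂)) = 0 := by linear_combination ha - hb
    simpa [sub_eq_zero, hab] using h
  exact ⟨hsum, by linear_combination a * hsum - ha⟩

theorem eq_and_eq_or_eq_and_eq_of_add_eq_add_of_mul_eq_mul {R : Type*} [CommRing R]
    [NoZeroDivisors R] {x₁ x₂ y₁ y₂ : R} (hsum : y₁ + y₂ = x₁ + x₂) (hprod : y₁ * y₂ = x₁ * x₂) :
    (y₁ = x₁ ∧ y₂ = x₂) ∨ (y₁ = x₂ ∧ y₂ = x₁) := by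
  have h : (y₁ - x₁) * (y₁ - x₂) = 0 := by linear_combination y₁ * hsum - hprod
  rcases mul_eq_zero.mp h with h | h
  · exact Or.inl ⟨sub_eq_zero.mp h, by linear_combination hsum - h⟩
  · exact Or.inr ⟨sub_eq_zero.mp h, by linear_combination hsum - h⟩

theorem refactorization_zeros_match_general
    (r : ℕ)
    (A G₁ G₂ Gt₁ Gt₂ : Matrix (Fin r) (Fin r) ℂ)
    (hA : IsUnit A.det)
    (hG₁ : G₁.rank = 1) (hG₂ : G₂.rank = 1)
    (hGt₁ : Gt₁.rank = 1) (hGt₂ : Gt₂.rank = 1)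
    (z₁ z₂ ζ₁ ζ₂ ζt₁ ζt₂ : ℂ)
    (hζ₁ : (G₁ * A⁻¹).trace = z₁ - ζ₁) (hζ₂ : (G₂ * A⁻¹).trace = z₂ - ζ₂)
    (hζt₁ : (Gt₁ * A⁻¹).trace = z₁ - ζt₁) (hζt₂ : (Gt₂ * A⁻¹).trace = z₂ - ζt₂)
    (hre : ∀ z : ℂ, z ≠ z₁ → z ≠ z₂ →
      (A + (z - z₂)⁻¹ • G₂) * (A + (z - z₁)⁻¹ • G₁) =
      (A + (z - z₁)⁻¹ • Gt₁) * (A + (z - z₂)⁻¹ • Gt₂)) :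
    (ζt₁ + ζt₂ = ζ₁ + ζ₂ ∧ ζt₁ * ζt₂ = ζ₁ * ζ₂) ∧
    ((ζt₁ = ζ₁ ∧ ζt₂ = ζ₂) ∨ (ζt₁ = ζ₂ ∧ ζt₂ = ζ₁)) := by
  have hquad : ∀ z, z ≠ z₁ → z ≠ z₂ → (z - ζ₁) * (z - ζ₂) = (z - ζt₁) * (z - ζt₂) := by
    intro z h₁ h₂
    have hdet := congr_arg det (hre z h₁ h₂)
    rw [det_mul, det_mul, det_add_inv_sub_smul hA hG₁.le h₁ hζ₁,
      det_add_inv_sub_smul hA hG₂.le h₂ hζ₂,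
      det_add_inv_sub_smul hA hGt₁.le h₁ hζt₁, det_add_inv_sub_smul hA hGt₂.le h₂ hζt₂] at hdet
    field_simp [sub_ne_zero.mpr h₁, sub_ne_zero.mpr h₂] at hdet
    refine mul_left_cancel₀ (pow_ne_zero 2 hA.ne_zero) ?_
    linear_combination hdet
  obtain ⟨a, ha, b, hb, hab⟩ := (Set.toFinite {z₁, z₂}).infinite_compl.nontrivial
  simp only [Set.mem_compl_iff, Set.mem_insert_iff, Set.mem_singleton_iff, not_or] at ha hb
  have hmatch := add_eq_add_and_mul_eq_mul_of_sub_mul_sub_eq hab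
    (hquad a ha.1 ha.2) (hquad b hb.1 hb.2)
  exact ⟨hmatch, eq_and_eq_or_eq_and_eq_of_add_eq_add_of_mul_eq_mul hmatch.1 hmatch.2⟩

/-- Under the refactorization identity `B₂(z)B₁(z) = B̃₁(z)B̃₂(z)` the zeros match:
`ζ̃₁ + ζ̃₂ = ζ₁ + ζ₂`, `ζ̃₁ζ̃₂ = ζ₁ζ₂`, hence `(ζ̃₁,ζ̃₂) = (ζ₁,ζ₂)` or `(ζ₂,ζ₁)`. -/
theorem refactorization_zeros_match
    (r : ℕ) (hr : 1 ≤ r)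
    (A G₁ G₂ Gt₁ Gt₂ : Matrix (Fin r) (Fin r) ℂ)
    (hA : IsUnit A.det)
    (hG₁ : G₁.rank = 1) (hG₂ : G₂.rank = 1)
    (hGt₁ : Gt₁.rank = 1) (hGt₂ : Gt₂.rank = 1)
    (z₁ z₂ ζ₁ ζ₂ ζt₁ ζt₂ : ℂ) (hz : z₁ ≠ z₂)
    (hζ₁ : (G₁ * A⁻¹).trace = z₁ - ζ₁) (hζ₂ : (G₂ * A⁻¹).trace = z₂ - ζ₂)
    (hζt₁ : (Gt₁ * A⁻¹).trace = z₁ - ζt₁) (hζt₂ : (Gt₂ * A⁻¹).trace = z₂ - ζt₂)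
    (hre : ∀ z : ℂ, z ≠ z₁ → z ≠ z₂ →
      (A + (z - z₂)⁻¹ • G₂) * (A + (z - z₁)⁻¹ • G₁) =
      (A + (z - z₁)⁻¹ • Gt₁) * (A + (z - z₂)⁻¹ • Gt₂)) :
    (ζt₁ + ζt₂ = ζ₁ + ζ₂ ∧ ζt₁ * ζt₂ = ζ₁ * ζ₂) ∧
    ((ζt₁ = ζ₁ ∧ ζt₂ = ζ₂) ∨ (ζt₁ = ζ₂ ∧ ζt₂ = ζ₁)) :=
  refactorization_zeros_match_general r A G₁ G₂ Gt₁ Gt₂ hA hG₁ hG₂ hGt₁ hGt₂ z₁ z₂ ζ₁ ζ₂ ζt₁ ζt₂ hζ₁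
    hζ₂ hζt₁ hζt₂ hre
end

section
/- There exist complex scalars c₁, c₂, d₁, d₂ such that B₂(z₁)·p₁ = c₁ • p̃₁, A·B̃₂(ζ₁)·A⁻¹·p₁ = c₂ • p̃₁, B̃₁(z₂)·p̃₂ = d₁ • p₂, and A·B₁(ζ₂)·A⁻¹·p̃₂ = d₂ • p₂. In other words, up to normalization the column vectors of the refactorized rank-one parts are [p̃₁] = [B₂(z₁)p₁] = [A·B̃₂(ζ₁)·A⁻¹·p₁] and [p₂] = [B̃₁(z₂)p̃₂] = [A·B₁(ζ₂)·A⁻¹·p̃₂]. -/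
/-!
Clearing denominators in `B₂ B₁ = B̃₁ B̃₂` gives an identity between matrix polynomials of
degree two with the same leading term `A²`, so it holds at every `z`, poles included. At
`z = z₁` it reads `B₂(z₁) p₁ q₁ = p̃₁ q̃₁ B̃₂(z₁)`, which forces `B₂(z₁) p₁ ∈ ℂ p̃₁`; at `z = z₂`
likewise `B̃₁(z₂) p̃₂ ∈ ℂ p₂`.

The trace condition makes `A⁻¹ p₁` a null vector of `B₁(ζ₁)`, so `B̃₂(ζ₁) A⁻¹ p₁` is a null
vector of `B̃₁(ζ₁) = A + c p̃₁ q̃₁`, and any null vector `v` of such a matrix has `A v ∈ ℂ p̃₁`.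
The same argument at `ζ₂`, with the two factorizations exchanged, gives the last column.
-/

open Matrix

section Refactorization

variable {K R : Type*} [Field K] [Ring R] [Algebra K R] {A G₁ G₂ H₁ H₂ : R} {a b : K}

theorem eq_zero_of_forall_notMem_smul_add_eq_zero [Infinite K] {V : Type*} [AddCommGroup V]
    [Module K V] {x y : V} {s : Set K} (hs : s.Finite) (h : ∀ z ∉ s, z • x + y = 0) :
    x = 0 ∧ y = 0 := by
  obtain ⟨z, hz⟩ := hs.infinite_compl.nonempty
  obtain ⟨w, hw⟩ := (hs.insert z).infinite_compl.nonempty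
  obtain ⟨hwz, hws⟩ := not_or.mp hw
  have hx : (w - z) • x = 0 := by
    rw [sub_smul, ← add_sub_add_right_eq_sub, h w hws, h z hz, sub_zero]
  have hx0 : x = 0 := (smul_eq_zero.mp hx).resolve_left (sub_ne_zero.mpr hwz)
  exact ⟨hx0, by simpa [hx0] using h z hz⟩

theorem smul_add_inv_smul {c : K} (hc : c ≠ 0) (x y : R) : c • (x + c⁻¹ • y) = c • x + y := by
  rw [smul_add, smul_smul, mul_inv_cancel₀ hc, one_smul]

theorem refactorization_cleared [Infinite K]
    (h : ∀ z, z ≠ a → z ≠ b →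
      (A + (z - b)⁻¹ • G₂) * (A + (z - a)⁻¹ • G₁) = (A + (z - a)⁻¹ • H₁) * (A + (z - b)⁻¹ • H₂))
    (z : K) :
    ((z - b) • A + G₂) * ((z - a) • A + G₁) = ((z - a) • A + H₁) * ((z - b) • A + H₂) := by
  set M := A * G₁ + G₂ * A - A * H₂ - H₁ * A
  set N := G₂ * G₁ - H₁ * H₂ - b • (A * G₁) - a • (G₂ * A) + a • (A * H₂) + b • (H₁ * A)
  have hdiff : ∀ z : K, ((z - b) • A + G₂) * ((z - a) • A + G₁) -
      ((z - a) • A + H₁) * ((z - b) • A + H₂) = z • M + N := by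
    intro z
    simp only [M, N, add_mul, mul_add, smul_mul_assoc, mul_smul_comm]
    module
  have hoff : ∀ z ∉ ({a, b} : Set K), z • M + N = 0 := by
    intro z hz
    simp only [Set.mem_insert_iff, Set.mem_singleton_iff, not_or] at hz
    have ha := sub_ne_zero.mpr hz.1
    have hb := sub_ne_zero.mpr hz.2
    rw [← hdiff, ← smul_add_inv_smul ha A, ← smul_add_inv_smul hb A, ← smul_add_inv_smul ha A,
      ← smul_add_inv_smul hb A, smul_mul_smul_comm, smul_mul_smul_comm, h z hz.1 hz.2, mul_comm,
      sub_self]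
  obtain ⟨hM, hN⟩ :=
    eq_zero_of_forall_notMem_smul_add_eq_zero (K := K) (V := R) (Set.toFinite _) hoff
  rw [← sub_eq_zero, hdiff, hM, hN, smul_zero, add_zero]

theorem refactorization_residue_left [Infinite K] (hab : a ≠ b)
    (h : ∀ z, z ≠ a → z ≠ b →
      (A + (z - b)⁻¹ • G₂) * (A + (z - a)⁻¹ • G₁) = (A + (z - a)⁻¹ • H₁) * (A + (z - b)⁻¹ • H₂)) :
    (A + (a - b)⁻¹ • G₂) * G₁ = H₁ * (A + (a - b)⁻¹ • H₂) := by
  have hc := refactorization_cleared h a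
  rw [sub_self, zero_smul, zero_add, zero_add, ← smul_add_inv_smul (sub_ne_zero.mpr hab),
    ← smul_add_inv_smul (sub_ne_zero.mpr hab) A H₂, smul_mul_assoc, mul_smul_comm] at hc
  exact smul_right_injective R (sub_ne_zero.mpr hab) hc

theorem refactorization_residue_right [Infinite K] (hab : a ≠ b)
    (h : ∀ z, z ≠ a → z ≠ b →
      (A + (z - b)⁻¹ • G₂) * (A + (z - a)⁻¹ • G₁) = (A + (z - a)⁻¹ • H₁) * (A + (z - b)⁻¹ • H₂)) :
    G₂ * (A + (b - a)⁻¹ • G₁) = (A + (b - a)⁻¹ • H₁) * H₂ := by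
  have hba := sub_ne_zero.mpr hab.symm
  have hc := refactorization_cleared h b
  rw [sub_self, zero_smul, zero_add, zero_add, ← smul_add_inv_smul hba A G₁,
    ← smul_add_inv_smul hba A H₁, smul_mul_assoc, mul_smul_comm] at hc
  exact smul_right_injective R hba hc

end Refactorization

section RankOne

variable {K : Type*} [Field K] {m n : Type*}

theorem Matrix.mul_fin_one_eq_smul_s6 (p : Matrix m (Fin 1) K) (x : Matrix (Fin 1) (Fin 1) K) :
    p * x = x 0 0 • p := by
  ext i j
  fin_cases j
  simp only [Fin.zero_eta, mul_apply, Finset.univ_unique, Fin.default_eq_zero,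
    Finset.sum_singleton, smul_apply, smul_eq_mul]
  exact mul_comm _ _

theorem exists_eq_smul_of_mul_eq_mul {v p : Matrix m (Fin 1) K}
    {q w : Matrix (Fin 1) n K} (hq : q ≠ 0) (h : v * q = p * w) : ∃ c : K, v = c • p := by
  obtain ⟨j, hj⟩ : ∃ j, q 0 j ≠ 0 := by
    by_contra! hc
    exact hq (Matrix.ext fun i j => by fin_cases i; exact hc j)
  refine ⟨w 0 j / q 0 j, Matrix.ext fun i k => ?_⟩
  fin_cases k
  have hij := congrFun (congrFun h i) j
  simp only [Matrix.mul_apply, Fin.sum_univ_one] at hij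
  simp only [Fin.zero_eta, Matrix.smul_apply, smul_eq_mul]
  field_simp
  linear_combination hij

theorem exists_mul_eq_smul_of_add_smul_mul_mul_eq_zero [Fintype n] {A : Matrix m n K}
    {p : Matrix m (Fin 1) K} {q : Matrix (Fin 1) n K} {v : Matrix n (Fin 1) K} (c : K)
    (h : (A + c • (p * q)) * v = 0) : ∃ s : K, A * v = s • p := by
  refine ⟨-(c * (q * v) 0 0), ?_⟩
  rw [Matrix.add_mul, Matrix.smul_mul, Matrix.mul_assoc, Matrix.mul_fin_one_eq_smul_s6,
    add_eq_zero_iff_eq_neg] at h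
  rw [h, smul_smul, neg_smul]

theorem elementary_divisor_mul_inv_mul_eq_zero [Fintype n] [DecidableEq n] {A : Matrix n n K}
    (hA : IsUnit A.det) {z ζ : K} (hzζ : z ≠ ζ) {p : Matrix n (Fin 1) K}
    {q : Matrix (Fin 1) n K} (ht : (p * q * A⁻¹).trace = z - ζ) :
    (A + (ζ - z)⁻¹ • (p * q)) * (A⁻¹ * p) = 0 := by
  rw [Matrix.mul_assoc, trace_mul_comm, trace_fin_one] at ht
  rw [Matrix.add_mul, mul_nonsing_inv_cancel_left A p hA, Matrix.smul_mul, Matrix.mul_assoc,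
    ← Matrix.mul_assoc q, Matrix.mul_fin_one_eq_smul_s6, ht, smul_smul, ← neg_sub z ζ, inv_neg,
    neg_mul, inv_mul_cancel₀ (sub_ne_zero.mpr hzζ), neg_smul, one_smul, add_neg_cancel]

end RankOne

theorem refactorization_columns_general
    (r : ℕ)
    (A : Matrix (Fin r) (Fin r) ℂ) (hA : IsUnit A.det)
    (z₁ z₂ ζ₁ ζ₂ : ℂ)
    (h12 : z₁ ≠ z₂) (h1a : z₁ ≠ ζ₁) (h1b : z₁ ≠ ζ₂)
    (h2a : z₂ ≠ ζ₁) (h2b : z₂ ≠ ζ₂)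
    (p₁ p₂ pt₁ pt₂ : Matrix (Fin r) (Fin 1) ℂ)
    (q₁ q₂ qt₁ qt₂ : Matrix (Fin 1) (Fin r) ℂ)
    (hq₁ : q₁ ≠ 0) (hqt₂ : qt₂ ≠ 0)
    (hζ₁ : (p₁ * q₁ * A⁻¹).trace = z₁ - ζ₁)
    (hζt₂ : (pt₂ * qt₂ * A⁻¹).trace = z₂ - ζ₂)
    (hre : ∀ z : ℂ, z ≠ z₁ → z ≠ z₂ →
      (A + (z - z₂)⁻¹ • (p₂ * q₂)) * (A + (z - z₁)⁻¹ • (p₁ * q₁)) =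
      (A + (z - z₁)⁻¹ • (pt₁ * qt₁)) * (A + (z - z₂)⁻¹ • (pt₂ * qt₂))) :
    ∃ c₁ c₂ d₁ d₂ : ℂ,
      (A + (z₁ - z₂)⁻¹ • (p₂ * q₂)) * p₁ = c₁ • pt₁ ∧
      A * (A + (ζ₁ - z₂)⁻¹ • (pt₂ * qt₂)) * A⁻¹ * p₁ = c₂ • pt₁ ∧
      (A + (z₂ - z₁)⁻¹ • (pt₁ * qt₁)) * pt₂ = d₁ • p₂ ∧
      A * (A + (ζ₂ - z₁)⁻¹ • (p₁ * q₁)) * A⁻¹ * pt₂ = d₂ • p₂ := by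
  have residue₁ := refactorization_residue_left h12 hre
  rw [← Matrix.mul_assoc, Matrix.mul_assoc pt₁] at residue₁
  obtain ⟨c₁, hc₁⟩ := exists_eq_smul_of_mul_eq_mul hq₁ residue₁
  have residue₂ := (refactorization_residue_right h12 hre).symm
  rw [← Matrix.mul_assoc, Matrix.mul_assoc p₂] at residue₂
  obtain ⟨d₁, hd₁⟩ := exists_eq_smul_of_mul_eq_mul hqt₂ residue₂
  have null₁ : (A + (ζ₁ - z₁)⁻¹ • (pt₁ * qt₁)) *
      ((A + (ζ₁ - z₂)⁻¹ • (pt₂ * qt₂)) * (A⁻¹ * p₁)) = 0 := by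
    rw [← Matrix.mul_assoc, ← hre ζ₁ h1a.symm h2a.symm, Matrix.mul_assoc,
      elementary_divisor_mul_inv_mul_eq_zero hA h1a hζ₁, Matrix.mul_zero]
  have null₂ : (A + (ζ₂ - z₂)⁻¹ • (p₂ * q₂)) *
      ((A + (ζ₂ - z₁)⁻¹ • (p₁ * q₁)) * (A⁻¹ * pt₂)) = 0 := by
    rw [← Matrix.mul_assoc, hre ζ₂ h1b.symm h2b.symm, Matrix.mul_assoc,
      elementary_divisor_mul_inv_mul_eq_zero hA h2b hζt₂, Matrix.mul_zero]
  obtain ⟨c₂, hc₂⟩ := exists_mul_eq_smul_of_add_smul_mul_mul_eq_zero _ null₁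
  obtain ⟨d₂, hd₂⟩ := exists_mul_eq_smul_of_add_smul_mul_mul_eq_zero _ null₂
  exact ⟨c₁, c₂, d₁, d₂, hc₁, by simpa only [Matrix.mul_assoc] using hc₂, hd₁,
    by simpa only [Matrix.mul_assoc] using hd₂⟩

/-- Column vectors of the refactorized rank-one parts, up to normalization:
`[p̃₁] = [B₂(z₁)p₁] = [A B̃₂(ζ₁) A⁻¹ p₁]` and `[p₂] = [B̃₁(z₂)p̃₂] = [A B₁(ζ₂) A⁻¹ p̃₂]`. -/
theorem refactorization_columns
    (r : ℕ) (hr : 1 ≤ r)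
    (A : Matrix (Fin r) (Fin r) ℂ) (hA : IsUnit A.det)
    (z₁ z₂ ζ₁ ζ₂ : ℂ)
    (h12 : z₁ ≠ z₂) (h1a : z₁ ≠ ζ₁) (h1b : z₁ ≠ ζ₂)
    (h2a : z₂ ≠ ζ₁) (h2b : z₂ ≠ ζ₂) (hab : ζ₁ ≠ ζ₂)
    (p₁ p₂ pt₁ pt₂ : Matrix (Fin r) (Fin 1) ℂ)
    (q₁ q₂ qt₁ qt₂ : Matrix (Fin 1) (Fin r) ℂ)
    (hp₁ : p₁ ≠ 0) (hp₂ : p₂ ≠ 0) (hpt₁ : pt₁ ≠ 0) (hpt₂ : pt₂ ≠ 0)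
    (hq₁ : q₁ ≠ 0) (hq₂ : q₂ ≠ 0) (hqt₁ : qt₁ ≠ 0) (hqt₂ : qt₂ ≠ 0)
    (hζ₁ : (p₁ * q₁ * A⁻¹).trace = z₁ - ζ₁)
    (hζt₁ : (pt₁ * qt₁ * A⁻¹).trace = z₁ - ζ₁)
    (hζ₂ : (p₂ * q₂ * A⁻¹).trace = z₂ - ζ₂)
    (hζt₂ : (pt₂ * qt₂ * A⁻¹).trace = z₂ - ζ₂)
    (hre : ∀ z : ℂ, z ≠ z₁ → z ≠ z₂ →
      (A + (z - z₂)⁻¹ • (p₂ * q₂)) * (A + (z - z₁)⁻¹ • (p₁ * q₁)) =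
      (A + (z - z₁)⁻¹ • (pt₁ * qt₁)) * (A + (z - z₂)⁻¹ • (pt₂ * qt₂))) :
    ∃ c₁ c₂ d₁ d₂ : ℂ,
      (A + (z₁ - z₂)⁻¹ • (p₂ * q₂)) * p₁ = c₁ • pt₁ ∧
      A * (A + (ζ₁ - z₂)⁻¹ • (pt₂ * qt₂)) * A⁻¹ * p₁ = c₂ • pt₁ ∧
      (A + (z₂ - z₁)⁻¹ • (pt₁ * qt₁)) * pt₂ = d₁ • p₂ ∧
      A * (A + (ζ₂ - z₁)⁻¹ • (p₁ * q₁)) * A⁻¹ * pt₂ = d₂ • p₂ :=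
  refactorization_columns_general r A hA z₁ z₂ ζ₁ ζ₂ h12 h1a h1b h2a h2b p₁ p₂ pt₁ pt₂ q₁ q₂ qt₁ qt₂
    hq₁ hqt₂ hζ₁ hζt₂ hre
end

section
/- Assume in addition that the scalars q₂†·p₁, q̃₂†·A⁻¹·p₁, q₂†·A⁻¹·p̃₁ and q̃₂†·A⁻²·p̃₁ are all nonzero. Then the rank-one parts G₁ and G̃₁ are completely determined by the vectors p₁, p̃₁, q₂†, q̃₂† via the explicit formulas G₁ = ((z₁ − z₂)·(q₂†·p₁)⁻¹ • (p₁·q₂†) + (z₂ − ζ₁)·(q̃₂†·A⁻¹·p₁)⁻¹ • (p₁·(q̃₂†·A⁻¹))) · A and G̃₁ = ((z₁ − ζ₂)·(q₂†·A⁻¹·p̃₁)⁻¹ • (p̃₁·(q₂†·A⁻¹)) + (ζ₂ − ζ₁)·(q̃₂†·A⁻²·p̃₁)⁻¹ • (p̃₁·(q̃₂†·A⁻²))) · A. -/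
open Matrix

lemma one_one_eq (S : Matrix (Fin 1) (Fin 1) ℂ) : S = S 0 0 • (1 : Matrix (Fin 1) (Fin 1) ℂ) := by
  ext i j
  rw [Subsingleton.elim i 0, Subsingleton.elim j 0]
  simp [Matrix.one_apply]

lemma mul_one_one {m : Type*} [Fintype m] (X : Matrix m (Fin 1) ℂ) (S : Matrix (Fin 1) (Fin 1) ℂ) :
    X * S = S 0 0 • X := by
  conv_lhs => rw [one_one_eq S]
  rw [Matrix.mul_smul, Matrix.mul_one]

lemma one_one_mul {m : Type*} [Fintype m] (S : Matrix (Fin 1) (Fin 1) ℂ) (Y : Matrix (Fin 1) m ℂ) :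
    S * Y = S 0 0 • Y := by
  conv_lhs => rw [one_one_eq S]
  rw [Matrix.smul_mul, Matrix.one_mul]

lemma col_mul_cancel {m n : Type*} [Fintype m] [Fintype n] (p : Matrix m (Fin 1) ℂ) (hp : p ≠ 0)
    {w w' : Matrix (Fin 1) n ℂ} (h : p * w = p * w') : w = w' := by
  obtain ⟨i, hi⟩ : ∃ i, p i 0 ≠ 0 := by
    by_contra hc; push_neg at hc
    exact hp (by ext i j; rw [Subsingleton.elim j 0]; simpa using hc i)
  ext k j
  rw [Subsingleton.elim k 0]
  have := congrFun (congrFun h i) j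
  simp only [Matrix.mul_apply, Fin.sum_univ_one] at this
  exact mul_left_cancel₀ hi this

lemma trace_one_one (S : Matrix (Fin 1) (Fin 1) ℂ) : S.trace = S 0 0 := by
  simp [Matrix.trace, Matrix.diag]

lemma trace_entry {m : Type*} [Fintype m] (p : Matrix m (Fin 1) ℂ) (q : Matrix (Fin 1) m ℂ)
    (B : Matrix m m ℂ) {c : ℂ} (h : (p * q * B).trace = c) :
    q * B * p = c • (1 : Matrix (Fin 1) (Fin 1) ℂ) := by
  have h' : (q * B * p) 0 0 = c := by
    rw [← trace_one_one (q * B * p), ← h, Matrix.mul_assoc p q B, Matrix.trace_mul_comm]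
  conv_lhs => rw [one_one_eq (q * B * p)]
  rw [h']

lemma sandwich {m : Type*} [Fintype m] (x : Matrix m (Fin 1) ℂ) (y : Matrix (Fin 1) m ℂ)
    (u : Matrix m (Fin 1) ℂ) (v : Matrix (Fin 1) m ℂ) :
    (x * y) * (u * v) = (y * u) 0 0 • (x * v) := by
  have h : (x * y) * (u * v) = x * ((y * u) * v) := by simp only [Matrix.mul_assoc]
  rw [h, one_one_mul, Matrix.mul_smul]

lemma expand_prod {m : Type*} [Fintype m] (c d : ℂ) (X P Y Q : Matrix m m ℂ) :
    (X + c • P) * (Y + d • Q) =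
      X * Y + d • (X * Q) + c • (P * Y) + (c * d) • (P * Q) := by
  simp only [Matrix.add_mul, Matrix.mul_add, Matrix.smul_mul, Matrix.mul_smul, smul_smul, smul_add]
  module

lemma affine_vanish {m : Type*} [Fintype m] (M N : Matrix m m ℂ) (s : Finset ℂ)
    (h : ∀ z ∉ s, z • M + N = 0) : M = 0 ∧ N = 0 := by
  have hinf : (↑s : Set ℂ)ᶜ.Infinite := (s.finite_toSet).infinite_compl
  obtain ⟨a, ha, b, hb, hab⟩ := hinf.nontrivial
  have h1 := h a (by simpa using ha)
  have h2 := h b (by simpa using hb)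
  have hM : M = 0 := by
    have hz : (a - b) • M = 0 := by
      rw [sub_smul]
      have : a • M = b • M := add_right_cancel (h1.trans h2.symm)
      rw [this, sub_self]
    rcases smul_eq_zero.mp hz with h | h
    · exact absurd (sub_eq_zero.mp h) hab
    · exact h
  refine ⟨hM, ?_⟩
  simpa [hM] using h1

lemma BC_one {m : Type*} [Fintype m] [DecidableEq m] (A : Matrix m m ℂ) (hA : IsUnit A.det)
    (p : Matrix m (Fin 1) ℂ) (q : Matrix (Fin 1) m ℂ) (z z₀ ζ : ℂ) (h0 : z ≠ z₀) (h1 : z ≠ ζ)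
    (htr : (p * q * A⁻¹).trace = z₀ - ζ) :
    (A + (z - z₀)⁻¹ • (p * q)) * (A⁻¹ + (-(z - ζ)⁻¹) • (A⁻¹ * (p * q) * A⁻¹)) = 1 := by
  have hz0 : z - z₀ ≠ 0 := sub_ne_zero.mpr h0
  have hz1 : z - ζ ≠ 0 := sub_ne_zero.mpr h1
  have hAA : A * A⁻¹ = 1 := Matrix.mul_nonsing_inv A hA
  have hA2 : A * (A⁻¹ * (p * q) * A⁻¹) = p * q * A⁻¹ := by
    rw [← Matrix.mul_assoc, ← Matrix.mul_assoc, hAA, Matrix.one_mul]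
  have hs : q * A⁻¹ * p = (z₀ - ζ) • (1 : Matrix (Fin 1) (Fin 1) ℂ) := trace_entry p q A⁻¹ htr
  have hGG : (p * q) * (A⁻¹ * (p * q) * A⁻¹) = (z₀ - ζ) • (p * q * A⁻¹) := by
    have h2 : (p * q) * (A⁻¹ * (p * q) * A⁻¹) = p * ((q * A⁻¹ * p) * (q * A⁻¹)) := by
      simp only [Matrix.mul_assoc]
    rw [h2, hs, Matrix.smul_mul, Matrix.one_mul, Matrix.mul_smul, ← Matrix.mul_assoc]
  rw [expand_prod, hAA, hA2, hGG, smul_smul]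
  have key : -(z - ζ)⁻¹ + (z - z₀)⁻¹ + (z - z₀)⁻¹ * -(z - ζ)⁻¹ * (z₀ - ζ) = 0 := by
    field_simp
    ring
  match_scalars
  · ring
  · linear_combination key

set_option maxHeartbeats 1600000 in
/-- The rank-one parts `G₁` and `G̃₁` are determined by `p₁, p̃₁, q₂†, q̃₂†`. -/
theorem refactorization_G1_formulas
    (r : ℕ) (hr : 1 ≤ r)
    (A : Matrix (Fin r) (Fin r) ℂ) (hA : IsUnit A.det)
    (z₁ z₂ ζ₁ ζ₂ : ℂ)
    (h12 : z₁ ≠ z₂) (h1a : z₁ ≠ ζ₁) (h1b : z₁ ≠ ζ₂)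
    (h2a : z₂ ≠ ζ₁) (h2b : z₂ ≠ ζ₂) (hab : ζ₁ ≠ ζ₂)
    (p₁ p₂ pt₁ pt₂ : Matrix (Fin r) (Fin 1) ℂ)
    (q₁ q₂ qt₁ qt₂ : Matrix (Fin 1) (Fin r) ℂ)
    (hp₁ : p₁ ≠ 0) (hp₂ : p₂ ≠ 0) (hpt₁ : pt₁ ≠ 0) (hpt₂ : pt₂ ≠ 0)
    (hq₁ : q₁ ≠ 0) (hq₂ : q₂ ≠ 0) (hqt₁ : qt₁ ≠ 0) (hqt₂ : qt₂ ≠ 0)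
    (hζ₁ : (p₁ * q₁ * A⁻¹).trace = z₁ - ζ₁)
    (hζt₁ : (pt₁ * qt₁ * A⁻¹).trace = z₁ - ζ₁)
    (hζ₂ : (p₂ * q₂ * A⁻¹).trace = z₂ - ζ₂)
    (hζt₂ : (pt₂ * qt₂ * A⁻¹).trace = z₂ - ζ₂)
    (hre : ∀ z : ℂ, z ≠ z₁ → z ≠ z₂ →
      (A + (z - z₂)⁻¹ • (p₂ * q₂)) * (A + (z - z₁)⁻¹ • (p₁ * q₁)) =
      (A + (z - z₁)⁻¹ • (pt₁ * qt₁)) * (A + (z - z₂)⁻¹ • (pt₂ * qt₂)))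
    (hs₁ : (q₂ * p₁) 0 0 ≠ 0)
    (hs₂ : (qt₂ * A⁻¹ * p₁) 0 0 ≠ 0)
    (hs₃ : (q₂ * A⁻¹ * pt₁) 0 0 ≠ 0)
    (hs₄ : (qt₂ * (A ^ 2)⁻¹ * pt₁) 0 0 ≠ 0) :
    p₁ * q₁ =
      (((z₁ - z₂) * ((q₂ * p₁) 0 0)⁻¹) • (p₁ * q₂)
        + ((z₂ - ζ₁) * ((qt₂ * A⁻¹ * p₁) 0 0)⁻¹) • (p₁ * (qt₂ * A⁻¹))) * A ∧
    pt₁ * qt₁ =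
      (((z₁ - ζ₂) * ((q₂ * A⁻¹ * pt₁) 0 0)⁻¹) • (pt₁ * (q₂ * A⁻¹))
        + ((ζ₂ - ζ₁) * ((qt₂ * (A ^ 2)⁻¹ * pt₁) 0 0)⁻¹) • (pt₁ * (qt₂ * (A ^ 2)⁻¹))) * A := by
  have hAA : A * A⁻¹ = 1 := Matrix.mul_nonsing_inv A hA
  have hAA' : A⁻¹ * A = 1 := Matrix.nonsing_inv_mul A hA
  -- ## Part 1: the B-side affine identity
  obtain ⟨hMB, hNB⟩ := affine_vanish
    (A * (p₁ * q₁) + (p₂ * q₂) * A - A * (pt₂ * qt₂) - (pt₁ * qt₁) * A)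
    ((p₂ * q₂) * (p₁ * q₁) - (pt₁ * qt₁) * (pt₂ * qt₂)
      - z₂ • (A * (p₁ * q₁)) - z₁ • ((p₂ * q₂) * A)
      + z₁ • (A * (pt₂ * qt₂)) + z₂ • ((pt₁ * qt₁) * A))
    ({z₁, z₂} : Finset ℂ) (by
      intro z hz
      rw [Finset.mem_insert, Finset.mem_singleton] at hz
      push_neg at hz
      obtain ⟨hz1, hz2⟩ := hz
      have hz1' : z - z₁ ≠ 0 := sub_ne_zero.mpr hz1
      have hz2' : z - z₂ ≠ 0 := sub_ne_zero.mpr hz2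
      have h' := hre z hz1 hz2
      rw [expand_prod, expand_prod] at h'
      have key : z • (A * (p₁ * q₁) + (p₂ * q₂) * A - A * (pt₂ * qt₂) - (pt₁ * qt₁) * A)
          + ((p₂ * q₂) * (p₁ * q₁) - (pt₁ * qt₁) * (pt₂ * qt₂)
            - z₂ • (A * (p₁ * q₁)) - z₁ • ((p₂ * q₂) * A)
            + z₁ • (A * (pt₂ * qt₂)) + z₂ • ((pt₁ * qt₁) * A))
          = ((z - z₁) * (z - z₂)) •
            ((A * A + (z - z₁)⁻¹ • (A * (p₁ * q₁)) + (z - z₂)⁻¹ • ((p₂ * q₂) * A)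
              + ((z - z₂)⁻¹ * (z - z₁)⁻¹) • ((p₂ * q₂) * (p₁ * q₁)))
            - (A * A + (z - z₂)⁻¹ • (A * (pt₂ * qt₂)) + (z - z₁)⁻¹ • ((pt₁ * qt₁) * A)
              + ((z - z₁)⁻¹ * (z - z₂)⁻¹) • ((pt₁ * qt₁) * (pt₂ * qt₂)))) := by
        match_scalars <;> field_simp <;> ring
      rw [key, h', sub_self, smul_zero])
  have K2 : (z₂ - z₁) • ((p₂ * q₂) * A) + (p₂ * q₂) * (p₁ * q₁)
      = (z₂ - z₁) • (A * (pt₂ * qt₂)) + (pt₁ * qt₁) * (pt₂ * qt₂) := by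
    have h0 : z₂ • (A * (p₁ * q₁) + (p₂ * q₂) * A - A * (pt₂ * qt₂) - (pt₁ * qt₁) * A)
        + ((p₂ * q₂) * (p₁ * q₁) - (pt₁ * qt₁) * (pt₂ * qt₂)
          - z₂ • (A * (p₁ * q₁)) - z₁ • ((p₂ * q₂) * A)
          + z₁ • (A * (pt₂ * qt₂)) + z₂ • ((pt₁ * qt₁) * A)) = 0 := by
      rw [hMB, hNB]; simp
    linear_combination (norm := module) h0
  -- rewrite K2 as p₂ * u = v * qt₂
  have hGG1 : (p₂ * q₂) * (p₁ * q₁) = (q₂ * p₁) 0 0 • (p₂ * q₁) := sandwich p₂ q₂ p₁ q₁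
  have hGG2 : (pt₁ * qt₁) * (pt₂ * qt₂) = (qt₁ * pt₂) 0 0 • (pt₁ * qt₂) := sandwich pt₁ qt₁ pt₂ qt₂
  have hu : p₂ * ((z₂ - z₁) • (q₂ * A) + (q₂ * p₁) 0 0 • q₁)
      = ((z₂ - z₁) • (A * pt₂) + (qt₁ * pt₂) 0 0 • pt₁) * qt₂ := by
    rw [hGG1, hGG2] at K2
    simp only [Matrix.mul_add, Matrix.add_mul, Matrix.mul_smul, Matrix.smul_mul,
      Matrix.mul_assoc] at K2 ⊢
    exact K2
  -- multiply on the right by A⁻¹ * p₁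
  have hq₁s : q₁ * A⁻¹ * p₁ = (z₁ - ζ₁) • (1 : Matrix (Fin 1) (Fin 1) ℂ) := trace_entry p₁ q₁ A⁻¹ hζ₁
  have hq₂s : q₂ * p₁ = (q₂ * p₁) 0 0 • (1 : Matrix (Fin 1) (Fin 1) ℂ) := one_one_eq _
  have hqt₂s : qt₂ * A⁻¹ * p₁ = (qt₂ * A⁻¹ * p₁) 0 0 • (1 : Matrix (Fin 1) (Fin 1) ℂ) := one_one_eq _
  have hu2 : ((z₂ - z₁) • (q₂ * A) + (q₂ * p₁) 0 0 • q₁) * (A⁻¹ * p₁)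
      = ((q₂ * p₁) 0 0 * (z₂ - ζ₁)) • (1 : Matrix (Fin 1) (Fin 1) ℂ) := by
    have e1 : (q₂ * A) * (A⁻¹ * p₁) = q₂ * p₁ := by
      rw [Matrix.mul_assoc q₂ A, ← Matrix.mul_assoc A A⁻¹, hAA, Matrix.one_mul]
    have e2 : q₁ * (A⁻¹ * p₁) = (z₁ - ζ₁) • (1 : Matrix (Fin 1) (Fin 1) ℂ) := by
      rw [← Matrix.mul_assoc]; exact hq₁s
    rw [Matrix.add_mul, Matrix.smul_mul, Matrix.smul_mul, e1, e2]
    ext i j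
    rw [Subsingleton.elim i 0, Subsingleton.elim j 0]
    simp [Matrix.one_apply]
    ring
  have e1 : p₂ * (((z₂ - z₁) • (q₂ * A) + (q₂ * p₁) 0 0 • q₁) * (A⁻¹ * p₁))
      = (((z₂ - z₁) • (A * pt₂) + (qt₁ * pt₂) 0 0 • pt₁) * qt₂) * (A⁻¹ * p₁) := by
    rw [← Matrix.mul_assoc, hu]
  rw [hu2, Matrix.mul_assoc _ qt₂ (A⁻¹ * p₁), ← Matrix.mul_assoc qt₂ A⁻¹ p₁, hqt₂s] at e1
  rw [Matrix.mul_smul, Matrix.mul_smul, Matrix.mul_one, Matrix.mul_one] at e1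
  -- solve for v
  have hv : (z₂ - z₁) • (A * pt₂) + (qt₁ * pt₂) 0 0 • pt₁
      = (((qt₂ * A⁻¹ * p₁) 0 0)⁻¹ * ((q₂ * p₁) 0 0 * (z₂ - ζ₁))) • p₂ := by
    have h := e1.symm
    have := congrArg (fun X => ((qt₂ * A⁻¹ * p₁) 0 0)⁻¹ • X) h
    simpa [smul_smul, ← mul_assoc, inv_mul_cancel₀ hs₂] using this
  have huq : p₂ * ((z₂ - z₁) • (q₂ * A) + (q₂ * p₁) 0 0 • q₁)
      = p₂ * ((((qt₂ * A⁻¹ * p₁) 0 0)⁻¹ * ((q₂ * p₁) 0 0 * (z₂ - ζ₁))) • qt₂) := by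
    rw [hu, hv, Matrix.smul_mul, Matrix.mul_smul]
  have hueq := col_mul_cancel p₂ hp₂ huq
  -- solve for q₁
  have hq₁eq : q₁ = ((q₂ * p₁) 0 0)⁻¹ •
      (((((qt₂ * A⁻¹ * p₁) 0 0)⁻¹ * ((q₂ * p₁) 0 0 * (z₂ - ζ₁))) • qt₂) - (z₂ - z₁) • (q₂ * A)) := by
    have h : (q₂ * p₁) 0 0 • q₁
        = ((((qt₂ * A⁻¹ * p₁) 0 0)⁻¹ * ((q₂ * p₁) 0 0 * (z₂ - ζ₁))) • qt₂) - (z₂ - z₁) • (q₂ * A) := by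
      rw [← hueq]; abel
    have := congrArg (fun X => ((q₂ * p₁) 0 0)⁻¹ • X) h
    simpa [smul_smul, ← mul_assoc, inv_mul_cancel₀ hs₁] using this
  constructor
  · -- first formula
    rw [hq₁eq]
    rw [Matrix.add_mul, Matrix.smul_mul, Matrix.smul_mul]
    have e2 : p₁ * (qt₂ * A⁻¹) * A = p₁ * qt₂ := by
      rw [Matrix.mul_assoc p₁ (qt₂ * A⁻¹) A, Matrix.mul_assoc qt₂ A⁻¹ A, hAA', Matrix.mul_one]
    rw [e2]
    rw [Matrix.mul_smul, Matrix.mul_sub, Matrix.mul_smul, Matrix.mul_smul]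
    simp only [smul_smul, smul_sub, Matrix.mul_assoc]
    match_scalars <;> field_simp <;> ring
  · -- ## Part 2: the C-side affine identity
    -- pointwise identity for the inverses
    have hCC : ∀ z ∉ ({z₁, z₂, ζ₁, ζ₂} : Finset ℂ),
        (A⁻¹ + (-(z - ζ₁)⁻¹) • (A⁻¹ * (p₁ * q₁) * A⁻¹)) * (A⁻¹ + (-(z - ζ₂)⁻¹) • (A⁻¹ * (p₂ * q₂) * A⁻¹))
        = (A⁻¹ + (-(z - ζ₂)⁻¹) • (A⁻¹ * (pt₂ * qt₂) * A⁻¹)) * (A⁻¹ + (-(z - ζ₁)⁻¹) • (A⁻¹ * (pt₁ * qt₁) * A⁻¹)) := by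
      intro z hz
      simp only [Finset.mem_insert, Finset.mem_singleton] at hz
      push_neg at hz
      obtain ⟨hz1, hz2, hza, hzb⟩ := hz
      have b₁ := BC_one A hA p₁ q₁ z z₁ ζ₁ hz1 hza hζ₁
      have b₂ := BC_one A hA p₂ q₂ z z₂ ζ₂ hz2 hzb hζ₂
      have bt₁ := BC_one A hA pt₁ qt₁ z z₁ ζ₁ hz1 hza hζt₁
      have bt₂ := BC_one A hA pt₂ qt₂ z z₂ ζ₂ hz2 hzb hζt₂
      set B₁ := A + (z - z₁)⁻¹ • (p₁ * q₁)
      set B₂ := A + (z - z₂)⁻¹ • (p₂ * q₂)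
      set Bt₁ := A + (z - z₁)⁻¹ • (pt₁ * qt₁)
      set Bt₂ := A + (z - z₂)⁻¹ • (pt₂ * qt₂)
      set C₁ := A⁻¹ + (-(z - ζ₁)⁻¹) • (A⁻¹ * (p₁ * q₁) * A⁻¹)
      set C₂ := A⁻¹ + (-(z - ζ₂)⁻¹) • (A⁻¹ * (p₂ * q₂) * A⁻¹)
      set Ct₁ := A⁻¹ + (-(z - ζ₁)⁻¹) • (A⁻¹ * (pt₁ * qt₁) * A⁻¹)
      set Ct₂ := A⁻¹ + (-(z - ζ₂)⁻¹) • (A⁻¹ * (pt₂ * qt₂) * A⁻¹)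
      have c₁b₁ : C₁ * B₁ = 1 := mul_eq_one_comm.mp b₁
      have c₂b₂ : C₂ * B₂ = 1 := mul_eq_one_comm.mp b₂
      have h1 : (C₁ * C₂) * (B₂ * B₁) = 1 := by
        rw [Matrix.mul_assoc C₁ C₂ _, ← Matrix.mul_assoc C₂ B₂ B₁, c₂b₂, Matrix.one_mul, c₁b₁]
      have h2 : (B₂ * B₁) * (Ct₂ * Ct₁) = 1 := by
        rw [show B₂ * B₁ = Bt₁ * Bt₂ from hre z hz1 hz2]
        rw [Matrix.mul_assoc Bt₁ Bt₂ _, ← Matrix.mul_assoc Bt₂ Ct₂ Ct₁, bt₂, Matrix.one_mul, bt₁]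
      calc C₁ * C₂ = (C₁ * C₂) * ((B₂ * B₁) * (Ct₂ * Ct₁)) := by rw [h2, Matrix.mul_one]
        _ = ((C₁ * C₂) * (B₂ * B₁)) * (Ct₂ * Ct₁) := by simp only [Matrix.mul_assoc]
        _ = Ct₂ * Ct₁ := by rw [h1, Matrix.one_mul]
    obtain ⟨hMC, hNC⟩ := affine_vanish
      (- (A⁻¹ * (A⁻¹ * (p₂ * q₂) * A⁻¹)) - (A⁻¹ * (p₁ * q₁) * A⁻¹) * A⁻¹
        + A⁻¹ * (A⁻¹ * (pt₁ * qt₁) * A⁻¹) + (A⁻¹ * (pt₂ * qt₂) * A⁻¹) * A⁻¹)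
      (ζ₁ • (A⁻¹ * (A⁻¹ * (p₂ * q₂) * A⁻¹)) + ζ₂ • ((A⁻¹ * (p₁ * q₁) * A⁻¹) * A⁻¹)
        + (A⁻¹ * (p₁ * q₁) * A⁻¹) * (A⁻¹ * (p₂ * q₂) * A⁻¹)
        - ζ₂ • (A⁻¹ * (A⁻¹ * (pt₁ * qt₁) * A⁻¹)) - ζ₁ • ((A⁻¹ * (pt₂ * qt₂) * A⁻¹) * A⁻¹)
        - (A⁻¹ * (pt₂ * qt₂) * A⁻¹) * (A⁻¹ * (pt₁ * qt₁) * A⁻¹))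
      ({z₁, z₂, ζ₁, ζ₂} : Finset ℂ) (by
        intro z hz
        have h' := hCC z hz
        simp only [Finset.mem_insert, Finset.mem_singleton] at hz
        push_neg at hz
        obtain ⟨hz1, hz2, hza, hzb⟩ := hz
        have hza' : z - ζ₁ ≠ 0 := sub_ne_zero.mpr hza
        have hzb' : z - ζ₂ ≠ 0 := sub_ne_zero.mpr hzb
        rw [expand_prod, expand_prod] at h'
        have key : z • (- (A⁻¹ * (A⁻¹ * (p₂ * q₂) * A⁻¹)) - (A⁻¹ * (p₁ * q₁) * A⁻¹) * A⁻¹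
              + A⁻¹ * (A⁻¹ * (pt₁ * qt₁) * A⁻¹) + (A⁻¹ * (pt₂ * qt₂) * A⁻¹) * A⁻¹)
            + (ζ₁ • (A⁻¹ * (A⁻¹ * (p₂ * q₂) * A⁻¹)) + ζ₂ • ((A⁻¹ * (p₁ * q₁) * A⁻¹) * A⁻¹)
              + (A⁻¹ * (p₁ * q₁) * A⁻¹) * (A⁻¹ * (p₂ * q₂) * A⁻¹)
              - ζ₂ • (A⁻¹ * (A⁻¹ * (pt₁ * qt₁) * A⁻¹)) - ζ₁ • ((A⁻¹ * (pt₂ * qt₂) * A⁻¹) * A⁻¹)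
              - (A⁻¹ * (pt₂ * qt₂) * A⁻¹) * (A⁻¹ * (pt₁ * qt₁) * A⁻¹))
            = ((z - ζ₁) * (z - ζ₂)) •
              ((A⁻¹ * A⁻¹ + (-(z - ζ₂)⁻¹) • (A⁻¹ * (A⁻¹ * (p₂ * q₂) * A⁻¹))
                + (-(z - ζ₁)⁻¹) • ((A⁻¹ * (p₁ * q₁) * A⁻¹) * A⁻¹)
                + ((-(z - ζ₁)⁻¹) * (-(z - ζ₂)⁻¹)) • ((A⁻¹ * (p₁ * q₁) * A⁻¹) * (A⁻¹ * (p₂ * q₂) * A⁻¹)))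
              - (A⁻¹ * A⁻¹ + (-(z - ζ₁)⁻¹) • (A⁻¹ * (A⁻¹ * (pt₁ * qt₁) * A⁻¹))
                + (-(z - ζ₂)⁻¹) • ((A⁻¹ * (pt₂ * qt₂) * A⁻¹) * A⁻¹)
                + ((-(z - ζ₂)⁻¹) * (-(z - ζ₁)⁻¹)) • ((A⁻¹ * (pt₂ * qt₂) * A⁻¹) * (A⁻¹ * (pt₁ * qt₁) * A⁻¹)))) := by
          match_scalars <;> field_simp <;> ring
        rw [key, h', sub_self, smul_zero])
    have Krel : (ζ₂ - ζ₁) • (A⁻¹ * (A⁻¹ * (p₂ * q₂) * A⁻¹))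
          - (A⁻¹ * (p₁ * q₁) * A⁻¹) * (A⁻¹ * (p₂ * q₂) * A⁻¹)
        = (ζ₂ - ζ₁) • ((A⁻¹ * (pt₂ * qt₂) * A⁻¹) * A⁻¹)
          - (A⁻¹ * (pt₂ * qt₂) * A⁻¹) * (A⁻¹ * (pt₁ * qt₁) * A⁻¹) := by
      have h0 : ζ₂ • (- (A⁻¹ * (A⁻¹ * (p₂ * q₂) * A⁻¹)) - (A⁻¹ * (p₁ * q₁) * A⁻¹) * A⁻¹
            + A⁻¹ * (A⁻¹ * (pt₁ * qt₁) * A⁻¹) + (A⁻¹ * (pt₂ * qt₂) * A⁻¹) * A⁻¹)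
          + (ζ₁ • (A⁻¹ * (A⁻¹ * (p₂ * q₂) * A⁻¹)) + ζ₂ • ((A⁻¹ * (p₁ * q₁) * A⁻¹) * A⁻¹)
            + (A⁻¹ * (p₁ * q₁) * A⁻¹) * (A⁻¹ * (p₂ * q₂) * A⁻¹)
            - ζ₂ • (A⁻¹ * (A⁻¹ * (pt₁ * qt₁) * A⁻¹)) - ζ₁ • ((A⁻¹ * (pt₂ * qt₂) * A⁻¹) * A⁻¹)
            - (A⁻¹ * (pt₂ * qt₂) * A⁻¹) * (A⁻¹ * (pt₁ * qt₁) * A⁻¹)) = 0 := by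
        rw [hMC, hNC]; simp
      linear_combination (norm := module) (-1 : ℂ) • h0
    -- rewrite Krel in column-row form
    have e1 : A⁻¹ * (A⁻¹ * (p₂ * q₂) * A⁻¹) = (A⁻¹ * (A⁻¹ * p₂)) * (q₂ * A⁻¹) := by
      simp only [Matrix.mul_assoc]
    have e2 : (A⁻¹ * (p₁ * q₁) * A⁻¹) * (A⁻¹ * (p₂ * q₂) * A⁻¹)
        = ((q₁ * A⁻¹) * (A⁻¹ * p₂)) 0 0 • ((A⁻¹ * p₁) * (q₂ * A⁻¹)) := by
      have h : (A⁻¹ * (p₁ * q₁) * A⁻¹) * (A⁻¹ * (p₂ * q₂) * A⁻¹)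
          = ((A⁻¹ * p₁) * (q₁ * A⁻¹)) * ((A⁻¹ * p₂) * (q₂ * A⁻¹)) := by
        simp only [Matrix.mul_assoc]
      rw [h, sandwich]
    have e3 : (A⁻¹ * (pt₂ * qt₂) * A⁻¹) * A⁻¹ = (A⁻¹ * pt₂) * ((qt₂ * A⁻¹) * A⁻¹) := by
      simp only [Matrix.mul_assoc]
    have e4 : (A⁻¹ * (pt₂ * qt₂) * A⁻¹) * (A⁻¹ * (pt₁ * qt₁) * A⁻¹)
        = ((qt₂ * A⁻¹) * (A⁻¹ * pt₁)) 0 0 • ((A⁻¹ * pt₂) * (qt₁ * A⁻¹)) := by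
      have h : (A⁻¹ * (pt₂ * qt₂) * A⁻¹) * (A⁻¹ * (pt₁ * qt₁) * A⁻¹)
          = ((A⁻¹ * pt₂) * (qt₂ * A⁻¹)) * ((A⁻¹ * pt₁) * (qt₁ * A⁻¹)) := by
        simp only [Matrix.mul_assoc]
      rw [h, sandwich]
    rw [e1, e2, e3, e4] at Krel
    -- τ = s₄
    have hτ : ((qt₂ * A⁻¹) * (A⁻¹ * pt₁)) 0 0 = (qt₂ * (A ^ 2)⁻¹ * pt₁) 0 0 := by
      have : qt₂ * (A ^ 2)⁻¹ * pt₁ = (qt₂ * A⁻¹) * (A⁻¹ * pt₁) := by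
        rw [pow_two, Matrix.mul_inv_rev]
        simp only [Matrix.mul_assoc]
      rw [this]
    rw [hτ] at Krel
    set τ := (qt₂ * (A ^ 2)⁻¹ * pt₁) 0 0 with hτdef
    set σ := ((q₁ * A⁻¹) * (A⁻¹ * p₂)) 0 0 with hσdef
    -- Krel : (ζ₂-ζ₁)•((A⁻¹*(A⁻¹*p₂))*(q₂*A⁻¹)) - σ•((A⁻¹*p₁)*(q₂*A⁻¹))
    --      = (ζ₂-ζ₁)•((A⁻¹*pt₂)*((qt₂*A⁻¹)*A⁻¹)) - τ•((A⁻¹*pt₂)*(qt₁*A⁻¹))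
    have hK : ((ζ₂ - ζ₁) • (A⁻¹ * (A⁻¹ * p₂)) - σ • (A⁻¹ * p₁)) * (q₂ * A⁻¹)
        = (A⁻¹ * pt₂) * ((ζ₂ - ζ₁) • ((qt₂ * A⁻¹) * A⁻¹) - τ • (qt₁ * A⁻¹)) := by
      rw [Matrix.sub_mul, Matrix.smul_mul, Matrix.smul_mul, Matrix.mul_sub, Matrix.mul_smul,
        Matrix.mul_smul]
      exact Krel
    -- multiply on the right by pt₁
    have hq₂pt : (q₂ * A⁻¹) * pt₁ = (q₂ * A⁻¹ * pt₁) 0 0 • (1 : Matrix (Fin 1) (Fin 1) ℂ) :=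
      one_one_eq _
    have hqt₁pt : (qt₁ * A⁻¹) * pt₁ = (z₁ - ζ₁) • (1 : Matrix (Fin 1) (Fin 1) ℂ) :=
      trace_entry pt₁ qt₁ A⁻¹ hζt₁
    have hqt₂pt : ((qt₂ * A⁻¹) * A⁻¹) * pt₁ = τ • (1 : Matrix (Fin 1) (Fin 1) ℂ) := by
      rw [Matrix.mul_assoc (qt₂ * A⁻¹) A⁻¹ pt₁, ← hτ]
      exact one_one_eq _
    have hrow : ((ζ₂ - ζ₁) • ((qt₂ * A⁻¹) * A⁻¹) - τ • (qt₁ * A⁻¹)) * pt₁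
        = (τ * (ζ₂ - z₁)) • (1 : Matrix (Fin 1) (Fin 1) ℂ) := by
      rw [Matrix.sub_mul, Matrix.smul_mul, Matrix.smul_mul, hqt₂pt, hqt₁pt]
      ext i j
      rw [Subsingleton.elim i 0, Subsingleton.elim j 0]
      simp [Matrix.one_apply]
      ring
    have e5 : (((ζ₂ - ζ₁) • (A⁻¹ * (A⁻¹ * p₂)) - σ • (A⁻¹ * p₁)) * (q₂ * A⁻¹)) * pt₁
        = ((A⁻¹ * pt₂) * ((ζ₂ - ζ₁) • ((qt₂ * A⁻¹) * A⁻¹) - τ • (qt₁ * A⁻¹))) * pt₁ := by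
      rw [hK]
    rw [Matrix.mul_assoc _ (q₂ * A⁻¹) pt₁, hq₂pt,
        Matrix.mul_assoc (A⁻¹ * pt₂) _ pt₁, hrow] at e5
    rw [Matrix.mul_smul, Matrix.mul_smul, Matrix.mul_one, Matrix.mul_one] at e5
    -- solve for the column
    have hvcol : (ζ₂ - ζ₁) • (A⁻¹ * (A⁻¹ * p₂)) - σ • (A⁻¹ * p₁)
        = (((q₂ * A⁻¹ * pt₁) 0 0)⁻¹ * (τ * (ζ₂ - z₁))) • (A⁻¹ * pt₂) := by
      have := congrArg (fun X => ((q₂ * A⁻¹ * pt₁) 0 0)⁻¹ • X) e5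
      simpa [smul_smul, ← mul_assoc, inv_mul_cancel₀ hs₃] using this
    have hApt : A⁻¹ * pt₂ ≠ 0 := by
      intro h
      apply hpt₂
      have := congrArg (fun X => A * X) h
      simpa [← Matrix.mul_assoc, hAA] using this
    have hKK : (A⁻¹ * pt₂) * ((ζ₂ - ζ₁) • ((qt₂ * A⁻¹) * A⁻¹) - τ • (qt₁ * A⁻¹))
        = (A⁻¹ * pt₂) * ((((q₂ * A⁻¹ * pt₁) 0 0)⁻¹ * (τ * (ζ₂ - z₁))) • (q₂ * A⁻¹)) := by
      rw [← hK, hvcol, Matrix.smul_mul, Matrix.mul_smul]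
    have hweq := col_mul_cancel (A⁻¹ * pt₂) hApt hKK
    -- solve for qt₁
    have hτ0 : τ ≠ 0 := hs₄
    have hqt₁eq : qt₁ = τ⁻¹ • ((ζ₂ - ζ₁) • ((qt₂ * A⁻¹) * A⁻¹)
        - (((q₂ * A⁻¹ * pt₁) 0 0)⁻¹ * (τ * (ζ₂ - z₁))) • (q₂ * A⁻¹)) * A := by
      have h : τ • (qt₁ * A⁻¹) = (ζ₂ - ζ₁) • ((qt₂ * A⁻¹) * A⁻¹)
          - (((q₂ * A⁻¹ * pt₁) 0 0)⁻¹ * (τ * (ζ₂ - z₁))) • (q₂ * A⁻¹) := by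
        rw [← hweq]; abel
      have h2 : qt₁ * A⁻¹ = τ⁻¹ • ((ζ₂ - ζ₁) • ((qt₂ * A⁻¹) * A⁻¹)
          - (((q₂ * A⁻¹ * pt₁) 0 0)⁻¹ * (τ * (ζ₂ - z₁))) • (q₂ * A⁻¹)) := by
        have := congrArg (fun X => τ⁻¹ • X) h
        simpa [smul_smul, ← mul_assoc, inv_mul_cancel₀ hτ0] using this
      have h3 := congrArg (fun X => X * A) h2
      simpa [Matrix.mul_assoc, hAA', Matrix.mul_one] using h3
    -- final computation
    rw [hqt₁eq]
    have hpow : (A ^ 2)⁻¹ = A⁻¹ * A⁻¹ := by rw [pow_two, Matrix.mul_inv_rev]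
    rw [hpow]
    simp only [Matrix.smul_mul, Matrix.mul_smul, Matrix.sub_mul, Matrix.add_mul,
      Matrix.mul_sub, smul_smul, smul_sub, Matrix.mul_assoc]
    match_scalars <;> field_simp <;> ring
end

section
/- Assume the two refactorization identities B̲₂(z)·B̲₁(z) = B₁(z)·B₂(z) and B₂(z)·B₁(z) = B̃₁(z)·B̃₂(z) hold for all z ∉ {z₁, z₂}, and that the scalars q₂†·p₁, q₂†·A⁻¹·p̲₁, q₂†·A⁻²·p₁ and q̲₂†·A⁻¹·p₁ are nonzero. Then there exist nonzero complex scalars c and c' such that c • p̃₁ = A · ((z₁−z₂)·(q₂†·p₁)⁻¹ • p₁ + (z₂−ζ₁)·(q₂†·A⁻¹·p̲₁)⁻¹ • (A⁻¹·p̲₁) + (ζ₁−ζ₂)·(q₂†·A⁻²·p₁)⁻¹ • (A⁻²·p₁)) and c' • q̃₂† = ((z₂−z₁)·(q₂†·p₁)⁻¹ • q₂† + (z₁−ζ₂)·(q̲₂†·A⁻¹·p₁)⁻¹ • (q̲₂†·A⁻¹) + (ζ₂−ζ₁)·(q₂†·A⁻²·p₁)⁻¹ • (q₂†·A⁻²))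 · A. (These are the explicit equations of motion of the isospectral discrete dynamical system.) -/
/-!
Multiplying a refactorization `B₂ B₁ = B̃₁ B̃₂` by `(z - z₁)(z - z₂)` turns it into a polynomial
identity in `z`; its residue at `z₁` reads `B₂(z₁) G₁ = G̃₁ B̃₂(z₁)`, so `p̃₁` is proportional to
`B₂(z₁) p₁ = A p₁ + (z₁ - z₂)⁻¹ (q₂† p₁) p₂`. It remains to eliminate `p₂`. The trace condition
gives `Bᵢ(z)⁻¹ = A⁻¹ - (z - ζᵢ)⁻¹ A⁻¹ Gᵢ A⁻¹`, again an elementary divisor, now with pole `ζᵢ`, so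
`B̲₂ B̲₁ = B₁ B₂` inverts to `B₂⁻¹ B₁⁻¹ = B̲₁⁻¹ B̲₂⁻¹`. The residue of the latter at `ζ₁` writes
`p₂` as a combination of `A⁻¹ p₁` and `p̲₁`, whose coefficients are fixed by pairing with
`q₂† A⁻¹` and using `q₂† A⁻¹ p₂ = z₂ - ζ₂`. Transposing all data and exchanging the indices
`1 ↔ 2` turns the formula for `p̃₁` into the one for `q̃₂†`.
-/

open Matrix

lemma mul_eq_mul_of_inverses {M : Type*} [Monoid M] {x y u v x' y' u' v' : M}
    (h : x * y = u * v) (hx : x' * x = 1) (hy : y' * y = 1) (hu : u * u' = 1) (hv : v * v' = 1) :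
    y' * x' = v' * u' :=
  left_inv_eq_right_inv (a := x * y)
    (by rw [mul_assoc, ← mul_assoc x', hx, one_mul, hy])
    (by rw [h, mul_assoc, ← mul_assoc v, hv, one_mul, hu])

section ElementaryDivisors

variable {𝕜 R : Type*} [Field 𝕜] [Ring R] [Algebra 𝕜 R]

lemma forall_smul_add_eq_zero_of_ne {M : Type*} [AddCommGroup M] [Module 𝕜 M] {U V : M}
    {u v : 𝕜} (huv : u ≠ v) (hu : u • U + V = 0) (hv : v • U + V = 0) (z : 𝕜) :
    z • U + V = 0 := by
  have hU : (u - v) • U = 0 := by linear_combination (norm := module) hu - hv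
  rw [(smul_eq_zero.mp hU).resolve_left (sub_ne_zero.mpr huv), smul_zero] at hu ⊢
  exact hu

lemma residues_eq_of_forall_mul_eq [Infinite 𝕜] {X P Q P' Q' : R} {a b : 𝕜} {s : Set 𝕜}
    (hs : s.Finite)
    (h : ∀ z ∉ s, (X + (z - a)⁻¹ • P) * (X + (z - b)⁻¹ • Q) =
      (X + (z - b)⁻¹ • P') * (X + (z - a)⁻¹ • Q')) :
    ((b - a) • X + P) * Q = P' * ((b - a) • X + Q') ∧
      P * ((a - b) • X + Q) = ((a - b) • X + P') * Q' := by
  set U := X * Q - P' * X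
  set W := P * X - X * Q'
  set V := P * Q - P' * Q'
  -- After clearing denominators the quadratic terms cancel: the difference is affine in `z`.
  have haffine : ∀ z ∉ insert a (insert b s), z • (U + W) + (V - a • U - b • W) = 0 := by
    intro z hz
    simp only [Set.mem_insert_iff, not_or] at hz
    obtain ⟨hza, hzb, hz⟩ := hz
    have ha : z - a ≠ 0 := sub_ne_zero.mpr hza
    have hb : z - b ≠ 0 := sub_ne_zero.mpr hzb
    calc z • (U + W) + (V - a • U - b • W)
        = ((z - a) * (z - b)) • ((X + (z - a)⁻¹ • P) * (X + (z - b)⁻¹ • Q) -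
          (X + (z - b)⁻¹ • P') * (X + (z - a)⁻¹ • Q')) := by
          simp only [U, W, V, mul_add, add_mul, smul_mul_assoc, mul_smul_comm, smul_smul,
            smul_sub, smul_add]
          match_scalars <;> field_simp <;> ring
      _ = 0 := by rw [h z hz, sub_self, smul_zero]
  have hfin : (insert a (insert b s)).Finite := (hs.insert b).insert a
  obtain ⟨u, hu⟩ := hfin.infinite_compl.nonempty
  obtain ⟨v, hv⟩ := (hfin.insert u).infinite_compl.nonempty
  have hline := forall_smul_add_eq_zero_of_ne (fun huv => hv (Or.inl huv.symm))
    (haffine u hu) (haffine v fun hv' => hv (Set.mem_insert_of_mem _ hv'))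
  constructor
  · rw [← sub_eq_zero]
    simp only [add_mul, mul_add, smul_mul_assoc, mul_smul_comm]
    linear_combination (norm := module) hline b
  · rw [← sub_eq_zero]
    simp only [add_mul, mul_add, smul_mul_assoc, mul_smul_comm]
    linear_combination (norm := module) hline a

variable {A Ai G : R} {w ζ z : 𝕜}

lemma add_smul_mul_add_smul_neg_eq_one (hA : A * Ai = 1) (hG : G * Ai * G = (w - ζ) • G)
    (hzw : z ≠ w) (hzζ : z ≠ ζ) :
    (A + (z - w)⁻¹ • G) * (Ai + (z - ζ)⁻¹ • -(Ai * G * Ai)) = 1 := by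
  have hw : z - w ≠ 0 := sub_ne_zero.mpr hzw
  have hζ : z - ζ ≠ 0 := sub_ne_zero.mpr hzζ
  have hAG : A * (Ai * G * Ai) = G * Ai := by rw [← mul_assoc, ← mul_assoc, hA, one_mul]
  have hGG : G * (Ai * G * Ai) = (w - ζ) • (G * Ai) := by
    rw [← mul_assoc, ← mul_assoc, hG, smul_mul_assoc]
  rw [mul_add, add_mul, add_mul, hA, smul_mul_assoc, mul_smul_comm, smul_mul_assoc,
    mul_smul_comm, mul_neg, mul_neg, hAG, hGG]
  match_scalars <;> field_simp
  ring

lemma add_smul_neg_mul_add_smul_eq_one (hA : Ai * A = 1) (hG : G * Ai * G = (w - ζ) • G)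
    (hzw : z ≠ w) (hzζ : z ≠ ζ) :
    (Ai + (z - ζ)⁻¹ • -(Ai * G * Ai)) * (A + (z - w)⁻¹ • G) = 1 := by
  have hw : z - w ≠ 0 := sub_ne_zero.mpr hzw
  have hζ : z - ζ ≠ 0 := sub_ne_zero.mpr hzζ
  have hGA : Ai * G * Ai * A = Ai * G := by rw [mul_assoc, hA, mul_one]
  have hGG : Ai * G * Ai * G = (w - ζ) • (Ai * G) := by
    rw [mul_assoc, mul_assoc, ← mul_assoc G, hG, mul_smul_comm]
  rw [add_mul, mul_add, mul_add, hA, smul_mul_assoc, mul_smul_comm, smul_mul_assoc,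
    mul_smul_comm, neg_mul, neg_mul, hGA, hGG]
  match_scalars <;> field_simp
  ring

variable {z₁ z₂ ζ₁ ζ₂ : 𝕜} {G₁ G₂ H₁ H₂ : R}

lemma inverse_refactorization (hAAi : A * Ai = 1) (hAiA : Ai * A = 1)
    (hG₁ : G₁ * Ai * G₁ = (z₁ - ζ₁) • G₁) (hG₂ : G₂ * Ai * G₂ = (z₂ - ζ₂) • G₂)
    (hH₁ : H₁ * Ai * H₁ = (z₁ - ζ₁) • H₁) (hH₂ : H₂ * Ai * H₂ = (z₂ - ζ₂) • H₂)
    (hz₁ : z ≠ z₁) (hz₂ : z ≠ z₂) (hzζ₁ : z ≠ ζ₁) (hzζ₂ : z ≠ ζ₂)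
    (h : (A + (z - z₂)⁻¹ • H₂) * (A + (z - z₁)⁻¹ • H₁) =
      (A + (z - z₁)⁻¹ • G₁) * (A + (z - z₂)⁻¹ • G₂)) :
    (Ai + (z - ζ₂)⁻¹ • -(Ai * G₂ * Ai)) * (Ai + (z - ζ₁)⁻¹ • -(Ai * G₁ * Ai)) =
      (Ai + (z - ζ₁)⁻¹ • -(Ai * H₁ * Ai)) * (Ai + (z - ζ₂)⁻¹ • -(Ai * H₂ * Ai)) :=
  (mul_eq_mul_of_inverses h (add_smul_neg_mul_add_smul_eq_one hAiA hH₂ hz₂ hzζ₂)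
    (add_smul_neg_mul_add_smul_eq_one hAiA hH₁ hz₁ hzζ₁)
    (add_smul_mul_add_smul_neg_eq_one hAAi hG₁ hz₁ hzζ₁)
    (add_smul_mul_add_smul_neg_eq_one hAAi hG₂ hz₂ hzζ₂)).symm

end ElementaryDivisors

namespace Matrix

variable {α : Type*} [CommSemiring α] {k l m n : Type*}

lemma mul_fin_one (p : Matrix m (Fin 1) α) (x : Matrix (Fin 1) (Fin 1) α) :
    p * x = x 0 0 • p := by
  ext i j
  simp [Matrix.mul_apply, Fin.fin_one_eq_zero j, mul_comm]

lemma fin_one_mul (x : Matrix (Fin 1) (Fin 1) α) (q : Matrix (Fin 1) m α) :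
    x * q = x 0 0 • q := by
  ext i j
  simp [Matrix.mul_apply, Fin.fin_one_eq_zero i]

lemma trace_mul_mul_eq_apply [Fintype n] (p : Matrix n (Fin 1) α) (q : Matrix (Fin 1) n α)
    (M : Matrix n n α) :
    (p * q * M).trace = (q * M * p) 0 0 := by
  rw [Matrix.mul_assoc, Matrix.trace_mul_comm, Matrix.trace_fin_one]

lemma mul_mul_mul_eq_smul [Fintype n] (p : Matrix n (Fin 1) α) (q : Matrix (Fin 1) n α)
    (M : Matrix n n α) :
    p * q * M * (p * q) = (q * M * p) 0 0 • (p * q) := by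
  calc p * q * M * (p * q) = p * (q * M * p * q) := by simp only [Matrix.mul_assoc]
    _ = (q * M * p) 0 0 • (p * q) := by rw [fin_one_mul, Matrix.mul_smul]

lemma mul_mul_eq_smul [Fintype n] (p : Matrix m (Fin 1) α) (q : Matrix (Fin 1) n α)
    (p' : Matrix n (Fin 1) α) :
    p * q * p' = (q * p') 0 0 • p := by
  rw [Matrix.mul_assoc, mul_fin_one]

lemma transpose_mul_transpose_apply [Fintype m] (M : Matrix l m α) (N : Matrix m n α)
    (i : n) (j : l) :
    (Nᵀ * Mᵀ) i j = (M * N) j i := by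
  rw [← transpose_mul, transpose_apply]

lemma transpose_mul_transpose_mul_transpose_apply [Fintype m] [Fintype n] (M : Matrix k m α)
    (N : Matrix m n α) (P : Matrix n l α) (i : l) (j : k) :
    (Pᵀ * Nᵀ * Mᵀ) i j = (M * N * P) j i := by
  rw [← transpose_mul, ← transpose_mul, transpose_apply, Matrix.mul_assoc]

lemma exists_eq_smul_of_mul_eq {𝕜 : Type*} [Field 𝕜] {u u' : Matrix m (Fin 1) 𝕜}
    {v v' : Matrix (Fin 1) n 𝕜} (hv : v ≠ 0) (h : u * v = u' * v') : ∃ t : 𝕜, u = t • u' := by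
  obtain ⟨j, hj⟩ : ∃ j, v 0 j ≠ 0 := by
    by_contra! hv0
    exact hv (Matrix.ext fun i j => by simp [Fin.fin_one_eq_zero i, hv0 j])
  refine ⟨v' 0 j / v 0 j, Matrix.ext fun i k => ?_⟩
  have hij := congrFun (congrFun h i) j
  simp only [Matrix.mul_apply, Finset.univ_unique, Finset.sum_singleton] at hij
  rw [Fin.fin_one_eq_zero k, Matrix.smul_apply, smul_eq_mul]
  field_simp
  linear_combination hij

end Matrix

section Refactorization

variable {𝕜 : Type*} [Field 𝕜] [Infinite 𝕜] {n : Type*} [Fintype n] [DecidableEq n]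
  {A : Matrix n n 𝕜} {z₁ z₂ ζ₁ ζ₂ : 𝕜}
  {pu₁ pu₂ p₁ p₂ pt₁ pt₂ : Matrix n (Fin 1) 𝕜} {qu₁ qu₂ q₁ q₂ qt₁ qt₂ : Matrix (Fin 1) n 𝕜}

lemma exists_smul_eq_of_refactorization (hA : IsUnit A.det) (h12 : z₁ ≠ z₂) (h1b : z₁ ≠ ζ₂)
    (hp₁ : p₁ ≠ 0) (hq₁ : q₁ ≠ 0) (hζ₂ : (q₂ * A⁻¹ * p₂) 0 0 = z₂ - ζ₂)
    (hre : ∀ z : 𝕜, z ≠ z₁ → z ≠ z₂ →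
      (A + (z - z₂)⁻¹ • (p₂ * q₂)) * (A + (z - z₁)⁻¹ • (p₁ * q₁)) =
      (A + (z - z₁)⁻¹ • (pt₁ * qt₁)) * (A + (z - z₂)⁻¹ • (pt₂ * qt₂))) :
    ∃ c : 𝕜, c ≠ 0 ∧ c • pt₁ = (z₁ - z₂) • (A * p₁) + (q₂ * p₁) 0 0 • p₂ := by
  obtain ⟨hres, -⟩ := residues_eq_of_forall_mul_eq (s := {z₁, z₂}) (Set.toFinite _)
    fun z hz => hre z (fun h => hz (Or.inl h)) (fun h => hz (Or.inr h))
  obtain ⟨c, hc⟩ := exists_eq_smul_of_mul_eq (u := ((z₁ - z₂) • A + p₂ * q₂) * p₁)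
    (u' := pt₁) hq₁ (by rw [Matrix.mul_assoc, hres, Matrix.mul_assoc])
  have hexpand :
      ((z₁ - z₂) • A + p₂ * q₂) * p₁ = (z₁ - z₂) • (A * p₁) + (q₂ * p₁) 0 0 • p₂ := by
    rw [Matrix.add_mul, Matrix.smul_mul, mul_mul_eq_smul]
  have hfactor : (z₁ - z₂) • A + p₂ * q₂ = (z₁ - z₂) • (A + (z₁ - z₂)⁻¹ • (p₂ * q₂)) := by
    rw [smul_add, smul_smul, mul_inv_cancel₀ (sub_ne_zero.mpr h12), one_smul]
  have hinv := add_smul_neg_mul_add_smul_eq_one (Matrix.nonsing_inv_mul A hA)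
    (by rw [mul_mul_mul_eq_smul, hζ₂]) h12 h1b
  have hB : (A + (z₁ - z₂)⁻¹ • (p₂ * q₂)) * p₁ ≠ 0 := fun h0 => hp₁ (by
    rw [← Matrix.one_mul p₁, ← hinv, Matrix.mul_assoc, h0, Matrix.mul_zero])
  refine ⟨c, fun hc0 => hB ?_, hc ▸ hexpand⟩
  rw [hc0, zero_smul, hfactor, Matrix.smul_mul, smul_eq_zero] at hc
  exact hc.resolve_left (sub_ne_zero.mpr h12)

lemma exists_sub_smul_eq_smul_of_refactorization (hA : IsUnit A.det) (hq₁ : q₁ ≠ 0)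
    (hζu₁ : (qu₁ * A⁻¹ * pu₁) 0 0 = z₁ - ζ₁) (hζ₁ : (q₁ * A⁻¹ * p₁) 0 0 = z₁ - ζ₁)
    (hζu₂ : (qu₂ * A⁻¹ * pu₂) 0 0 = z₂ - ζ₂) (hζ₂ : (q₂ * A⁻¹ * p₂) 0 0 = z₂ - ζ₂)
    (hre : ∀ z : 𝕜, z ≠ z₁ → z ≠ z₂ →
      (A + (z - z₂)⁻¹ • (pu₂ * qu₂)) * (A + (z - z₁)⁻¹ • (pu₁ * qu₁)) =
      (A + (z - z₁)⁻¹ • (p₁ * q₁)) * (A + (z - z₂)⁻¹ • (p₂ * q₂))) :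
    ∃ t : 𝕜, (ζ₁ - ζ₂) • (A⁻¹ * p₁) - (q₂ * (A ^ 2)⁻¹ * p₁) 0 0 • p₂ = t • pu₁ := by
  have hAAi := Matrix.mul_nonsing_inv A hA
  have hAiA := Matrix.nonsing_inv_mul A hA
  have hinv : ∀ z ∉ ({z₁, z₂, ζ₁, ζ₂} : Set 𝕜),
      (A⁻¹ + (z - ζ₂)⁻¹ • -(A⁻¹ * (p₂ * q₂) * A⁻¹)) *
        (A⁻¹ + (z - ζ₁)⁻¹ • -(A⁻¹ * (p₁ * q₁) * A⁻¹)) =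
      (A⁻¹ + (z - ζ₁)⁻¹ • -(A⁻¹ * (pu₁ * qu₁) * A⁻¹)) *
        (A⁻¹ + (z - ζ₂)⁻¹ • -(A⁻¹ * (pu₂ * qu₂) * A⁻¹)) := by
    intro z hz
    simp only [Set.mem_insert_iff, Set.mem_singleton_iff, not_or] at hz
    obtain ⟨hz₁, hz₂, hzζ₁, hzζ₂⟩ := hz
    exact inverse_refactorization hAAi hAiA (by rw [mul_mul_mul_eq_smul, hζ₁])
      (by rw [mul_mul_mul_eq_smul, hζ₂]) (by rw [mul_mul_mul_eq_smul, hζu₁])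
      (by rw [mul_mul_mul_eq_smul, hζu₂]) hz₁ hz₂ hzζ₁ hzζ₂ (hre z hz₁ hz₂)
  obtain ⟨hres, -⟩ := residues_eq_of_forall_mul_eq (Set.toFinite _) hinv
  set M := (ζ₁ - ζ₂) • A⁻¹ + -(A⁻¹ * (p₂ * q₂) * A⁻¹)
  have hq₁A : q₁ * A⁻¹ ≠ 0 := fun h => hq₁ (by
    rw [← Matrix.mul_one q₁, ← hAiA, ← Matrix.mul_assoc, h, Matrix.zero_mul])
  obtain ⟨t, ht⟩ := exists_eq_smul_of_mul_eq (u := M * (A⁻¹ * p₁)) (u' := A⁻¹ * pu₁)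
    hq₁A (by simpa only [Matrix.mul_neg, Matrix.neg_mul, neg_inj, Matrix.mul_assoc] using hres)
  have hAM : A * M = (ζ₁ - ζ₂) • 1 - p₂ * (q₂ * A⁻¹) := by
    simp only [M, Matrix.mul_add, Matrix.mul_smul, Matrix.mul_neg, ← Matrix.mul_assoc, hAAi,
      Matrix.one_mul, sub_eq_add_neg]
  have hs₃ : q₂ * (A ^ 2)⁻¹ * p₁ = q₂ * A⁻¹ * (A⁻¹ * p₁) := by
    rw [sq, Matrix.mul_inv_rev]
    simp only [Matrix.mul_assoc]
  refine ⟨t, ?_⟩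
  calc (ζ₁ - ζ₂) • (A⁻¹ * p₁) - (q₂ * (A ^ 2)⁻¹ * p₁) 0 0 • p₂
        = A * (M * (A⁻¹ * p₁)) := by
        rw [← Matrix.mul_assoc, hAM, Matrix.sub_mul, Matrix.smul_mul, Matrix.one_mul,
          mul_mul_eq_smul, hs₃]
    _ = t • pu₁ := by rw [ht, Matrix.mul_smul, ← Matrix.mul_assoc, hAAi, Matrix.one_mul]

lemma eq_smul_add_smul_of_refactorization (hA : IsUnit A.det) (hq₁ : q₁ ≠ 0)
    (hζu₁ : (qu₁ * A⁻¹ * pu₁) 0 0 = z₁ - ζ₁) (hζ₁ : (q₁ * A⁻¹ * p₁) 0 0 = z₁ - ζ₁)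
    (hζu₂ : (qu₂ * A⁻¹ * pu₂) 0 0 = z₂ - ζ₂) (hζ₂ : (q₂ * A⁻¹ * p₂) 0 0 = z₂ - ζ₂)
    (hre : ∀ z : 𝕜, z ≠ z₁ → z ≠ z₂ →
      (A + (z - z₂)⁻¹ • (pu₂ * qu₂)) * (A + (z - z₁)⁻¹ • (pu₁ * qu₁)) =
      (A + (z - z₁)⁻¹ • (p₁ * q₁)) * (A + (z - z₂)⁻¹ • (p₂ * q₂)))
    (hs₂ : (q₂ * A⁻¹ * pu₁) 0 0 ≠ 0) (hs₃ : (q₂ * (A ^ 2)⁻¹ * p₁) 0 0 ≠ 0) :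
    p₂ = ((ζ₁ - ζ₂) * ((q₂ * (A ^ 2)⁻¹ * p₁) 0 0)⁻¹) • (A⁻¹ * p₁)
      + ((z₂ - ζ₁) * ((q₂ * A⁻¹ * pu₁) 0 0)⁻¹) • pu₁ := by
  obtain ⟨t, ht⟩ := exists_sub_smul_eq_smul_of_refactorization hA hq₁ hζu₁ hζ₁ hζu₂ hζ₂ hre
  have hpair := congrArg (fun v => (q₂ * A⁻¹ * v) 0 0) ht
  simp only [Matrix.mul_sub, Matrix.mul_smul, Matrix.sub_apply, Matrix.smul_apply, smul_eq_mul,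
    hζ₂, ← Matrix.mul_assoc, Matrix.mul_assoc q₂ A⁻¹ A⁻¹, ← sq, Matrix.inv_pow'] at hpair
  set s₂ := (q₂ * A⁻¹ * pu₁) 0 0
  set s₃ := (q₂ * (A ^ 2)⁻¹ * p₁) 0 0
  have ht' : t = s₃ * (ζ₁ - z₂) / s₂ := by
    field_simp
    linear_combination -hpair
  have hp₂ : s₃ • p₂ = (ζ₁ - ζ₂) • (A⁻¹ * p₁) - t • pu₁ := by rw [← ht, sub_sub_cancel]
  rw [← inv_smul_smul₀ hs₃ p₂, hp₂, ht']
  match_scalars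
  · ring
  · field_simp
    ring

lemma exists_smul_col_eq_of_refactorizations (hA : IsUnit A.det) (h12 : z₁ ≠ z₂)
    (h1b : z₁ ≠ ζ₂) (hp₁ : p₁ ≠ 0) (hq₁ : q₁ ≠ 0)
    (hζu₁ : (qu₁ * A⁻¹ * pu₁) 0 0 = z₁ - ζ₁) (hζ₁ : (q₁ * A⁻¹ * p₁) 0 0 = z₁ - ζ₁)
    (hζu₂ : (qu₂ * A⁻¹ * pu₂) 0 0 = z₂ - ζ₂) (hζ₂ : (q₂ * A⁻¹ * p₂) 0 0 = z₂ - ζ₂)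
    (hre₁ : ∀ z : 𝕜, z ≠ z₁ → z ≠ z₂ →
      (A + (z - z₂)⁻¹ • (pu₂ * qu₂)) * (A + (z - z₁)⁻¹ • (pu₁ * qu₁)) =
      (A + (z - z₁)⁻¹ • (p₁ * q₁)) * (A + (z - z₂)⁻¹ • (p₂ * q₂)))
    (hre₂ : ∀ z : 𝕜, z ≠ z₁ → z ≠ z₂ →
      (A + (z - z₂)⁻¹ • (p₂ * q₂)) * (A + (z - z₁)⁻¹ • (p₁ * q₁)) =
      (A + (z - z₁)⁻¹ • (pt₁ * qt₁)) * (A + (z - z₂)⁻¹ • (pt₂ * qt₂)))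
    (hs₁ : (q₂ * p₁) 0 0 ≠ 0) (hs₂ : (q₂ * A⁻¹ * pu₁) 0 0 ≠ 0)
    (hs₃ : (q₂ * (A ^ 2)⁻¹ * p₁) 0 0 ≠ 0) :
    ∃ c : 𝕜, c ≠ 0 ∧ c • pt₁ = A *
      (((z₁ - z₂) * ((q₂ * p₁) 0 0)⁻¹) • p₁
        + ((z₂ - ζ₁) * ((q₂ * A⁻¹ * pu₁) 0 0)⁻¹) • (A⁻¹ * pu₁)
        + ((ζ₁ - ζ₂) * ((q₂ * (A ^ 2)⁻¹ * p₁) 0 0)⁻¹) • ((A ^ 2)⁻¹ * p₁)) := by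
  obtain ⟨c, hc, hcp⟩ := exists_smul_eq_of_refactorization hA h12 h1b hp₁ hq₁ hζ₂ hre₂
  have hp₂ := eq_smul_add_smul_of_refactorization hA hq₁ hζu₁ hζ₁ hζu₂ hζ₂ hre₁ hs₂ hs₃
  have hAAi := Matrix.mul_nonsing_inv A hA
  refine ⟨((q₂ * p₁) 0 0)⁻¹ * c, mul_ne_zero (inv_ne_zero hs₁) hc, ?_⟩
  rw [mul_smul, hcp, hp₂, ← Matrix.inv_pow', sq]
  simp only [Matrix.mul_add, Matrix.mul_smul, ← Matrix.mul_assoc, hAAi, Matrix.one_mul]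
  match_scalars <;> field_simp

lemma exists_smul_row_eq_of_refactorizations (hA : IsUnit A.det) (h12 : z₁ ≠ z₂)
    (h2a : z₂ ≠ ζ₁) (hp₂ : p₂ ≠ 0) (hq₂ : q₂ ≠ 0)
    (hζu₁ : (qu₁ * A⁻¹ * pu₁) 0 0 = z₁ - ζ₁) (hζ₁ : (q₁ * A⁻¹ * p₁) 0 0 = z₁ - ζ₁)
    (hζu₂ : (qu₂ * A⁻¹ * pu₂) 0 0 = z₂ - ζ₂) (hζ₂ : (q₂ * A⁻¹ * p₂) 0 0 = z₂ - ζ₂)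
    (hre₁ : ∀ z : 𝕜, z ≠ z₁ → z ≠ z₂ →
      (A + (z - z₂)⁻¹ • (pu₂ * qu₂)) * (A + (z - z₁)⁻¹ • (pu₁ * qu₁)) =
      (A + (z - z₁)⁻¹ • (p₁ * q₁)) * (A + (z - z₂)⁻¹ • (p₂ * q₂)))
    (hre₂ : ∀ z : 𝕜, z ≠ z₁ → z ≠ z₂ →
      (A + (z - z₂)⁻¹ • (p₂ * q₂)) * (A + (z - z₁)⁻¹ • (p₁ * q₁)) =
      (A + (z - z₁)⁻¹ • (pt₁ * qt₁)) * (A + (z - z₂)⁻¹ • (pt₂ * qt₂)))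
    (hs₁ : (q₂ * p₁) 0 0 ≠ 0) (hs₃ : (q₂ * (A ^ 2)⁻¹ * p₁) 0 0 ≠ 0)
    (hs₄ : (qu₂ * A⁻¹ * p₁) 0 0 ≠ 0) :
    ∃ c : 𝕜, c ≠ 0 ∧ c • qt₂ =
      (((z₂ - z₁) * ((q₂ * p₁) 0 0)⁻¹) • q₂
        + ((z₁ - ζ₂) * ((qu₂ * A⁻¹ * p₁) 0 0)⁻¹) • (qu₂ * A⁻¹)
        + ((ζ₂ - ζ₁) * ((q₂ * (A ^ 2)⁻¹ * p₁) 0 0)⁻¹) • (q₂ * (A ^ 2)⁻¹)) * A := by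
  have hinv : Aᵀ⁻¹ = A⁻¹ᵀ := (transpose_nonsing_inv A).symm
  have hinv_sq : (Aᵀ ^ 2)⁻¹ = (A ^ 2)⁻¹ᵀ := by rw [← transpose_pow, transpose_nonsing_inv]
  obtain ⟨c, hc, h⟩ := exists_smul_col_eq_of_refactorizations (A := Aᵀ) (z₁ := z₂) (z₂ := z₁)
    (ζ₁ := ζ₂) (ζ₂ := ζ₁) (pu₁ := qu₂ᵀ) (pu₂ := qu₁ᵀ) (p₁ := q₂ᵀ) (p₂ := q₁ᵀ) (pt₁ := qt₂ᵀ)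
    (pt₂ := qt₁ᵀ) (qu₁ := pu₂ᵀ) (qu₂ := pu₁ᵀ) (q₁ := p₂ᵀ) (q₂ := p₁ᵀ) (qt₁ := pt₂ᵀ)
    (qt₂ := pt₁ᵀ) (by rwa [det_transpose]) h12.symm h2a
    (by rwa [Ne, transpose_eq_zero]) (by rwa [Ne, transpose_eq_zero])
    (by rwa [hinv, transpose_mul_transpose_mul_transpose_apply])
    (by rwa [hinv, transpose_mul_transpose_mul_transpose_apply])
    (by rwa [hinv, transpose_mul_transpose_mul_transpose_apply])
    (by rwa [hinv, transpose_mul_transpose_mul_transpose_apply])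
    (fun z h2 h1 => by
      simpa only [transpose_mul, transpose_add, transpose_smul] using
        congrArg transpose (hre₁ z h1 h2))
    (fun z h2 h1 => by
      simpa only [transpose_mul, transpose_add, transpose_smul] using
        congrArg transpose (hre₂ z h1 h2))
    (by rwa [transpose_mul_transpose_apply])
    (by rwa [hinv, transpose_mul_transpose_mul_transpose_apply])
    (by rwa [hinv_sq, transpose_mul_transpose_mul_transpose_apply])
  refine ⟨c, hc, transpose_injective ?_⟩
  simpa only [transpose_smul, transpose_mul, transpose_add, transpose_transpose, hinv, hinv_sq,
    transpose_mul_transpose_apply, transpose_mul_transpose_mul_transpose_apply] using h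

end Refactorization

theorem isospectral_equations_of_motion_general
    (r : ℕ)
    (A : Matrix (Fin r) (Fin r) ℂ) (hA : IsUnit A.det)
    (z₁ z₂ ζ₁ ζ₂ : ℂ)
    (h12 : z₁ ≠ z₂) (h1b : z₁ ≠ ζ₂)
    (h2a : z₂ ≠ ζ₁)
    (pu₁ pu₂ p₁ p₂ pt₁ pt₂ : Matrix (Fin r) (Fin 1) ℂ)
    (qu₁ qu₂ q₁ q₂ qt₁ qt₂ : Matrix (Fin 1) (Fin r) ℂ)
    (hp₁ : p₁ ≠ 0) (hp₂ : p₂ ≠ 0)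
    (hq₁ : q₁ ≠ 0) (hq₂ : q₂ ≠ 0)
    (hζu₁ : (pu₁ * qu₁ * A⁻¹).trace = z₁ - ζ₁)
    (hζ₁ : (p₁ * q₁ * A⁻¹).trace = z₁ - ζ₁)
    (hζu₂ : (pu₂ * qu₂ * A⁻¹).trace = z₂ - ζ₂)
    (hζ₂ : (p₂ * q₂ * A⁻¹).trace = z₂ - ζ₂)
    (hre₁ : ∀ z : ℂ, z ≠ z₁ → z ≠ z₂ →
      (A + (z - z₂)⁻¹ • (pu₂ * qu₂)) * (A + (z - z₁)⁻¹ • (pu₁ * qu₁)) =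
      (A + (z - z₁)⁻¹ • (p₁ * q₁)) * (A + (z - z₂)⁻¹ • (p₂ * q₂)))
    (hre₂ : ∀ z : ℂ, z ≠ z₁ → z ≠ z₂ →
      (A + (z - z₂)⁻¹ • (p₂ * q₂)) * (A + (z - z₁)⁻¹ • (p₁ * q₁)) =
      (A + (z - z₁)⁻¹ • (pt₁ * qt₁)) * (A + (z - z₂)⁻¹ • (pt₂ * qt₂)))
    (hs₁ : (q₂ * p₁) 0 0 ≠ 0)
    (hs₂ : (q₂ * A⁻¹ * pu₁) 0 0 ≠ 0)
    (hs₃ : (q₂ * (A ^ 2)⁻¹ * p₁) 0 0 ≠ 0)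
    (hs₄ : (qu₂ * A⁻¹ * p₁) 0 0 ≠ 0) :
    ∃ c c' : ℂ, c ≠ 0 ∧ c' ≠ 0 ∧
      c • pt₁ = A *
        (((z₁ - z₂) * ((q₂ * p₁) 0 0)⁻¹) • p₁
          + ((z₂ - ζ₁) * ((q₂ * A⁻¹ * pu₁) 0 0)⁻¹) • (A⁻¹ * pu₁)
          + ((ζ₁ - ζ₂) * ((q₂ * (A ^ 2)⁻¹ * p₁) 0 0)⁻¹) • ((A ^ 2)⁻¹ * p₁)) ∧
      c' • qt₂ =
        (((z₂ - z₁) * ((q₂ * p₁) 0 0)⁻¹) • q₂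
          + ((z₁ - ζ₂) * ((qu₂ * A⁻¹ * p₁) 0 0)⁻¹) • (qu₂ * A⁻¹)
          + ((ζ₂ - ζ₁) * ((q₂ * (A ^ 2)⁻¹ * p₁) 0 0)⁻¹) • (q₂ * (A ^ 2)⁻¹)) * A := by
  rw [trace_mul_mul_eq_apply] at hζu₁ hζ₁ hζu₂ hζ₂
  obtain ⟨c, hc, hcol⟩ := exists_smul_col_eq_of_refactorizations hA h12 h1b hp₁ hq₁
    hζu₁ hζ₁ hζu₂ hζ₂ hre₁ hre₂ hs₁ hs₂ hs₃
  obtain ⟨c', hc', hrow⟩ := exists_smul_row_eq_of_refactorizations hA h12 h2a hp₂ hq₂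
    hζu₁ hζ₁ hζu₂ hζ₂ hre₁ hre₂ hs₁ hs₃ hs₄
  exact ⟨c, c', hc, hc', hcol, hrow⟩

/-- Explicit equations of motion of the isospectral discrete dynamical system:
`p̃₁` and `q̃₂†` are proportional to the stated explicit combinations. -/
theorem isospectral_equations_of_motion
    (r : ℕ) (hr : 1 ≤ r)
    (A : Matrix (Fin r) (Fin r) ℂ) (hA : IsUnit A.det)
    (z₁ z₂ ζ₁ ζ₂ : ℂ)
    (h12 : z₁ ≠ z₂) (h1a : z₁ ≠ ζ₁) (h1b : z₁ ≠ ζ₂)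
    (h2a : z₂ ≠ ζ₁) (h2b : z₂ ≠ ζ₂) (hab : ζ₁ ≠ ζ₂)
    (pu₁ pu₂ p₁ p₂ pt₁ pt₂ : Matrix (Fin r) (Fin 1) ℂ)
    (qu₁ qu₂ q₁ q₂ qt₁ qt₂ : Matrix (Fin 1) (Fin r) ℂ)
    (hpu₁ : pu₁ ≠ 0) (hpu₂ : pu₂ ≠ 0) (hp₁ : p₁ ≠ 0) (hp₂ : p₂ ≠ 0)
    (hpt₁ : pt₁ ≠ 0) (hpt₂ : pt₂ ≠ 0)
    (hqu₁ : qu₁ ≠ 0) (hqu₂ : qu₂ ≠ 0) (hq₁ : q₁ ≠ 0) (hq₂ : q₂ ≠ 0)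
    (hqt₁ : qt₁ ≠ 0) (hqt₂ : qt₂ ≠ 0)
    (hζu₁ : (pu₁ * qu₁ * A⁻¹).trace = z₁ - ζ₁)
    (hζ₁ : (p₁ * q₁ * A⁻¹).trace = z₁ - ζ₁)
    (hζt₁ : (pt₁ * qt₁ * A⁻¹).trace = z₁ - ζ₁)
    (hζu₂ : (pu₂ * qu₂ * A⁻¹).trace = z₂ - ζ₂)
    (hζ₂ : (p₂ * q₂ * A⁻¹).trace = z₂ - ζ₂)
    (hζt₂ : (pt₂ * qt₂ * A⁻¹).trace = z₂ - ζ₂)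
    (hre₁ : ∀ z : ℂ, z ≠ z₁ → z ≠ z₂ →
      (A + (z - z₂)⁻¹ • (pu₂ * qu₂)) * (A + (z - z₁)⁻¹ • (pu₁ * qu₁)) =
      (A + (z - z₁)⁻¹ • (p₁ * q₁)) * (A + (z - z₂)⁻¹ • (p₂ * q₂)))
    (hre₂ : ∀ z : ℂ, z ≠ z₁ → z ≠ z₂ →
      (A + (z - z₂)⁻¹ • (p₂ * q₂)) * (A + (z - z₁)⁻¹ • (p₁ * q₁)) =
      (A + (z - z₁)⁻¹ • (pt₁ * qt₁)) * (A + (z - z₂)⁻¹ • (pt₂ * qt₂)))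
    (hs₁ : (q₂ * p₁) 0 0 ≠ 0)
    (hs₂ : (q₂ * A⁻¹ * pu₁) 0 0 ≠ 0)
    (hs₃ : (q₂ * (A ^ 2)⁻¹ * p₁) 0 0 ≠ 0)
    (hs₄ : (qu₂ * A⁻¹ * p₁) 0 0 ≠ 0) :
    ∃ c c' : ℂ, c ≠ 0 ∧ c' ≠ 0 ∧
      c • pt₁ = A *
        (((z₁ - z₂) * ((q₂ * p₁) 0 0)⁻¹) • p₁
          + ((z₂ - ζ₁) * ((q₂ * A⁻¹ * pu₁) 0 0)⁻¹) • (A⁻¹ * pu₁)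
          + ((ζ₁ - ζ₂) * ((q₂ * (A ^ 2)⁻¹ * p₁) 0 0)⁻¹) • ((A ^ 2)⁻¹ * p₁)) ∧
      c' • qt₂ =
        (((z₂ - z₁) * ((q₂ * p₁) 0 0)⁻¹) • q₂
          + ((z₁ - ζ₂) * ((qu₂ * A⁻¹ * p₁) 0 0)⁻¹) • (qu₂ * A⁻¹)
          + ((ζ₂ - ζ₁) * ((q₂ * (A ^ 2)⁻¹ * p₁) 0 0)⁻¹) • (q₂ * (A ^ 2)⁻¹)) * A :=
  isospectral_equations_of_motion_general r A hA z₁ z₂ ζ₁ ζ₂ h12 h1b h2a pu₁ pu₂ p₁ p₂ pt₁ pt₂ qu₁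
    qu₂ q₁ q₂ qt₁ qt₂ hp₁ hp₂ hq₁ hq₂ hζu₁ hζ₁ hζu₂ hζ₂ hre₁ hre₂ hs₁ hs₂ hs₃ hs₄
end

section
/- Let B₁(z) = A + (z−z₁)⁻¹•G₁ and B₂(z) = A + (z−z₂)⁻¹•G₂ be elementary divisors with z₁ ≠ z₂, zeros ζ₁, ζ₂ defined by tr(Gᵢ·A⁻¹) = zᵢ − ζᵢ, and set L₀ = A², L₁ = G₁·B₂(z₁), L₂ = B₁(z₂)·G₂. Assume tr(L₀⁻¹·L₁·L₂) ≠ 0. Then, with γ := (z₂−z₁)·((z₁−ζ₁) − tr(L₀⁻¹·L₁))/tr(L₀⁻¹·L₁·L₂), one has: (a) G₁·G₂ = γ • (L₁·L₂); (b) γ = (z₁−z₂)·((z₂−ζ₂) − tr(L₀⁻¹·L₂))/tr(L₀⁻¹·L₁·L₂); (c) G₁·A = L₁ + (((z₁−ζ₁) − tr(L₀⁻¹·L₁))/tr(L₀⁻¹·L₁·L₂)) • (L₁·L₂); and (d) A·G₂ = L₂ + (((z₂−ζ₂) − tr(L₀⁻¹·L₂))/tr(L₀⁻¹·L₁·L₂))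 • (L₁·L₂). This recovers the multiplicative representation of L(z) = B₁(z)B₂(z) from its additive representation. -/
open Matrix Module Submodule

lemma rank_one_decomp {n : ℕ} (G : Matrix (Fin n) (Fin n) ℂ) (h : G.rank = 1) :
    ∃ u v : Fin n → ℂ, G = Matrix.of (fun i j => u i * v j) := by
  unfold Matrix.rank at h
  have hpos : 0 < finrank ℂ (LinearMap.range G.mulVecLin) := by omega
  rw [finrank_pos_iff] at hpos
  obtain ⟨x, hx⟩ := exists_ne (0 : LinearMap.range G.mulVecLin)
  have hu : (x : Fin n → ℂ) ≠ 0 := by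
    intro h0
    exact hx (Subtype.ext h0)
  have hcol : ∀ j : Fin n, ∃ c : ℂ, ∀ i, c * (x : Fin n → ℂ) i = G i j := by
    intro j
    have hmem : (fun i => G i j) ∈ LinearMap.range G.mulVecLin := by
      refine ⟨Pi.single j 1, ?_⟩
      ext i
      simp [Matrix.mulVecLin, Matrix.mulVec_single]
    obtain ⟨c, hc⟩ := exists_smul_eq_of_finrank_eq_one h (x := x) hx (⟨_, hmem⟩ :
      LinearMap.range G.mulVecLin)
    refine ⟨c, fun i => ?_⟩
    have := congrArg (fun (y : LinearMap.range G.mulVecLin) => (y : Fin n → ℂ) i) hc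
    simpa using this
  choose v hv using hcol
  refine ⟨(x : Fin n → ℂ), v, ?_⟩
  ext i j
  simp [← hv j i, mul_comm]

lemma sandwich_s15 {n : ℕ} (G : Matrix (Fin n) (Fin n) ℂ) (h : G.rank = 1)
    (X : Matrix (Fin n) (Fin n) ℂ) : G * X * G = (X * G).trace • G := by
  obtain ⟨u, v, rfl⟩ := rank_one_decomp G h
  ext i j
  simp only [Matrix.mul_apply, Matrix.smul_apply, Matrix.trace, Matrix.diag,
    Matrix.of_apply, smul_eq_mul, Finset.sum_mul, Finset.mul_sum]
  rw [Finset.sum_comm]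
  apply Finset.sum_congr rfl; intro k _
  apply Finset.sum_congr rfl; intro l _
  ring

lemma swap_trace {n : ℕ} (G₁ G₂ : Matrix (Fin n) (Fin n) ℂ)
    (h₁ : G₁.rank = 1) (h₂ : G₂.rank = 1) (P M N : Matrix (Fin n) (Fin n) ℂ) :
    (P * (G₁ * M * G₂)).trace • (G₁ * N * G₂) =
    (P * (G₁ * N * G₂)).trace • (G₁ * M * G₂) := by
  have e₂ : G₂ * (P * G₁ * M) * G₂ = ((P * G₁ * M) * G₂).trace • G₂ :=
    sandwich_s15 G₂ h₂ _
  have e₁ : G₁ * (N * G₂ * P) * G₁ = ((N * G₂ * P) * G₁).trace • G₁ :=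
    sandwich_s15 G₁ h₁ _
  have t₂ : (P * (G₁ * M * G₂)).trace = ((P * G₁ * M) * G₂).trace := by
    rw [← mul_assoc, ← mul_assoc]
  have t₁ : (P * (G₁ * N * G₂)).trace = ((N * G₂ * P) * G₁).trace := by
    rw [Matrix.trace_mul_comm]
    rw [show G₁ * N * G₂ * P = G₁ * (N * G₂ * P) by noncomm_ring]
    rw [Matrix.trace_mul_comm]
  have key : (G₁ * N) * (G₂ * (P * G₁ * M) * G₂) =
      (G₁ * (N * G₂ * P) * G₁) * (M * G₂) := by noncomm_ring
  rw [e₁, e₂] at key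
  rw [t₁, t₂]
  calc ((P * G₁ * M) * G₂).trace • (G₁ * N * G₂)
      = (G₁ * N) * (((P * G₁ * M) * G₂).trace • G₂) := by
        simp [Matrix.mul_smul, mul_assoc]
    _ = (((N * G₂ * P) * G₁).trace • G₁) * (M * G₂) := key
    _ = ((N * G₂ * P) * G₁).trace • (G₁ * M * G₂) := by
        simp [Matrix.smul_mul, mul_assoc]

/-- Recovering the multiplicative representation of `L(z) = B₁(z)B₂(z)` from its
additive representation `L(z) = L₀ + (z−z₁)⁻¹ • L₁ + (z−z₂)⁻¹ • L₂`. -/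
theorem multiplicative_from_additive
    (r : ℕ) (hr : 1 ≤ r)
    (A G₁ G₂ : Matrix (Fin r) (Fin r) ℂ) (hA : IsUnit A.det)
    (hG₁ : G₁.rank = 1) (hG₂ : G₂.rank = 1)
    (z₁ z₂ ζ₁ ζ₂ : ℂ) (hz : z₁ ≠ z₂)
    (hζ₁ : (G₁ * A⁻¹).trace = z₁ - ζ₁) (hζ₂ : (G₂ * A⁻¹).trace = z₂ - ζ₂)
    (L₀ L₁ L₂ : Matrix (Fin r) (Fin r) ℂ)
    (hL₀ : L₀ = A ^ 2)
    (hL₁ : L₁ = G₁ * (A + (z₁ - z₂)⁻¹ • G₂))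
    (hL₂ : L₂ = (A + (z₂ - z₁)⁻¹ • G₁) * G₂)
    (htr : (L₀⁻¹ * L₁ * L₂).trace ≠ 0)
    (γ : ℂ)
    (hγ : γ = (z₂ - z₁) * ((z₁ - ζ₁) - (L₀⁻¹ * L₁).trace) / (L₀⁻¹ * L₁ * L₂).trace) :
    G₁ * G₂ = γ • (L₁ * L₂) ∧
    γ = (z₁ - z₂) * ((z₂ - ζ₂) - (L₀⁻¹ * L₂).trace) / (L₀⁻¹ * L₁ * L₂).trace ∧
    G₁ * A = L₁ + (((z₁ - ζ₁) - (L₀⁻¹ * L₁).trace) / (L₀⁻¹ * L₁ * L₂).trace) • (L₁ * L₂) ∧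
    A * G₂ = L₂ + (((z₂ - ζ₂) - (L₀⁻¹ * L₂).trace) / (L₀⁻¹ * L₁ * L₂).trace) • (L₁ * L₂) := by
  have hz' : z₁ - z₂ ≠ 0 := sub_ne_zero.mpr hz
  set u := (z₁ - z₂)⁻¹ with hu
  have hneg : (z₂ - z₁)⁻¹ = -u := by
    rw [show z₂ - z₁ = -(z₁ - z₂) by ring, inv_neg, hu]
  set T := (L₀⁻¹ * L₁ * L₂).trace with hT
  set τ := (L₀⁻¹ * (G₁ * G₂)).trace with hτ
  have hAP : A * L₀⁻¹ = A⁻¹ := by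
    rw [hL₀, pow_two, Matrix.mul_inv_rev, ← mul_assoc, Matrix.mul_nonsing_inv A hA, one_mul]
  have hPA : L₀⁻¹ * A = A⁻¹ := by
    rw [hL₀, pow_two, Matrix.mul_inv_rev, mul_assoc, Matrix.nonsing_inv_mul A hA, mul_one]
  have hL₁' : L₁ = G₁ * A + u • (G₁ * G₂) := by
    rw [hL₁, mul_add, Matrix.mul_smul]
  have hL₂' : L₂ = A * G₂ + (-u) • (G₁ * G₂) := by
    rw [hL₂, hneg, add_mul, Matrix.smul_mul]
  have htr1 : (L₀⁻¹ * L₁).trace = (z₁ - ζ₁) + u * τ := by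
    rw [hL₁', mul_add, Matrix.trace_add, Matrix.mul_smul, Matrix.trace_smul, smul_eq_mul]
    congr 1
    rw [Matrix.trace_mul_comm, mul_assoc, hAP, hζ₁]
  have htr2 : (L₀⁻¹ * L₂).trace = (z₂ - ζ₂) - u * τ := by
    rw [hL₂', mul_add, Matrix.trace_add, Matrix.mul_smul, Matrix.trace_smul, smul_eq_mul]
    have : (L₀⁻¹ * (A * G₂)).trace = z₂ - ζ₂ := by
      rw [← mul_assoc, hPA, Matrix.trace_mul_comm, hζ₂]
    rw [this]; ring
  have hn₁ : (z₁ - ζ₁) - (L₀⁻¹ * L₁).trace = -(u * τ) := by rw [htr1]; ring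
  have hn₂ : (z₂ - ζ₂) - (L₀⁻¹ * L₂).trace = u * τ := by rw [htr2]; ring
  set N := (A + u • G₂) * (A + (-u) • G₁) with hN
  have hprod : L₁ * L₂ = G₁ * N * G₂ := by
    rw [hL₁, hL₂, hneg, hN]
    simp only [mul_assoc]
  have hst := swap_trace G₁ G₂ hG₁ hG₂ L₀⁻¹ 1 N
  rw [mul_one] at hst
  have hT' : T = (L₀⁻¹ * (G₁ * N * G₂)).trace := by rw [hT, mul_assoc, hprod]
  have key : τ • (L₁ * L₂) = T • (G₁ * G₂) := by rw [hprod, hT']; exact hst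
  have h1 : (z₂ - z₁) * -(u * τ) = τ := by
    rw [hu]; field_simp; ring
  have hγτ : γ = τ / T := by rw [hγ, hn₁, h1]
  have ha : G₁ * G₂ = γ • (L₁ * L₂) := by
    rw [hγτ, div_eq_inv_mul, ← smul_smul, key, smul_smul, inv_mul_cancel₀ htr, one_smul]
  have hGG : G₁ * G₂ = (τ / T) • (L₁ * L₂) := by rw [← hγτ]; exact ha
  refine ⟨ha, ?_, ?_, ?_⟩
  · rw [hn₂, hγτ]
    have h2 : (z₁ - z₂) * (u * τ) = τ := by rw [hu]; field_simp
    rw [h2]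
  · rw [hn₁]
    have hc : (-(u * τ) / T) • (L₁ * L₂) = (-u) • (G₁ * G₂) := by
      rw [hGG, smul_smul]
      congr 1
      ring
    rw [hc, hL₁', add_assoc, ← add_smul, add_neg_cancel, zero_smul, add_zero]
  · rw [hn₂]
    have hd : (u * τ / T) • (L₁ * L₂) = u • (G₁ * G₂) := by
      rw [hGG, smul_smul]
      congr 1
      ring
    rw [hd, hL₂', add_assoc, ← add_smul, neg_add_cancel, zero_smul, add_zero]
end

section
/- The matrix function L(z) built from the explicit rank-one matrices L₁, L₂ has spectral coordinates (q, p) and type (z₁, z₂; ζ₁, ζ₂; ρ₁, ρ₂; k₁, k₂); precisely: (a) L(q)₁₂ = 0; (b) (q − z₁)·L(q)₁₁ = p·(q − ζ₂); (c) (L₀⁻¹·(L₁ + L₂))₁₁ = k₁ and (L₀⁻¹·(L₁ + L₂))₂₂ = k₂; and (d) for all z ∉ {z₁, z₂}, det(L(z))·(z−z₁)·(z−z₂) = ρ₁·ρ₂·(z−ζ₁)·(z−ζ₂). -/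
/-!
Clearing denominators, `det L(z) · (z - z₁)(z - z₂)` is a polynomial in `z`: the residues have
rank one, so `det L(z)` has only simple poles. It is quadratic with leading coefficient `det L₀`,
and its `z`-coefficient `-(z₁ + z₂) det L₀ + tr (adj L₀ · (L₁ + L₂))` equals
`-(ζ₁ + ζ₂) det L₀` by (c) and the constraint on `k₁ + k₂`. Hence it differs from
`det L₀ · (z - ζ₁)(z - ζ₂)` by a constant, which vanishes at `z = q`: there
`L(q) = L₀ + (R₁ - R₂) / (z₂ - z₁)` (with `Lᵢ = cᵢ Rᵢ`) is lower triangular with diagonal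
`p (q - ζ₂) / (q - z₁)` and `ρ₁ ρ₂ (q - ζ₁) / (p (q - z₂))`.
-/

open Matrix

namespace Matrix

variable {R : Type*} [CommRing R]

theorem det_add_fin_two (M N : Matrix (Fin 2) (Fin 2) R) :
    (M + N).det = M.det + N.det + (M.adjugate * N).trace := by
  simp only [det_fin_two, adjugate_fin_two, trace_fin_two, mul_apply, Fin.sum_univ_two, add_apply,
    of_apply, cons_val', cons_val_zero, cons_val_one, empty_val', cons_val_fin_one]
  ring

theorem det_add_smul_add_smul_fin_two {A B : Matrix (Fin 2) (Fin 2) R}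
    (hA : A.det = 0) (hB : B.det = 0) (L₀ : Matrix (Fin 2) (Fin 2) R) (s t : R) :
    (L₀ + s • A + t • B).det = L₀.det + s * (L₀.adjugate * A).trace
      + t * (L₀.adjugate * B).trace + s * t * (A.adjugate * B).trace := by
  rw [add_assoc, det_add_fin_two, det_add_fin_two, det_smul, det_smul, hA, hB, Matrix.mul_add,
    trace_add, adjugate_smul, Matrix.smul_mul]
  simp only [Matrix.mul_smul, trace_smul, Fintype.card_fin, smul_eq_mul]
  ring

theorem col_mul_row_fin_two (u v : R) : !![1; u] * !![v, 1] = !![v, 1; u * v, u] := by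
  simp

theorem det_smul_col_mul_row_fin_two (c u v : R) : (c • (!![1; u] * !![v, 1])).det = 0 := by
  rw [col_mul_row_fin_two, det_smul, det_fin_two_of]
  ring

theorem inv_diag_fin_two {K : Type*} [Field K] {a b : K} (ha : a ≠ 0) (hb : b ≠ 0) :
    (!![a, 0; 0, b])⁻¹ = diagonal ![a⁻¹, b⁻¹] :=
  inv_eq_left_inv <| by
    rw [← diagonal_vec2, diagonal_mul_diagonal, ← diagonal_one]
    congr 1
    ext i
    fin_cases i <;> simp [ha, hb]

end Matrix

section TwoPoles

variable {K : Type*} [Field K] {z₁ z₂ q : K}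

theorem add_inv_smul_div_smul_add {m n : Type*} (hq₁ : q ≠ z₁) (hq₂ : q ≠ z₂)
    (L₀ X Y : Matrix m n K) :
    L₀ + (q - z₁)⁻¹ • (((q - z₁) / (z₂ - z₁)) • X)
      + (q - z₂)⁻¹ • (((q - z₂) / (z₁ - z₂)) • Y) =
      L₀ + (z₂ - z₁)⁻¹ • (X - Y) := by
  have h₁ : (q - z₁)⁻¹ * ((q - z₁) / (z₂ - z₁)) = (z₂ - z₁)⁻¹ := by
    rw [div_eq_mul_inv, inv_mul_cancel_left₀ (sub_ne_zero.2 hq₁)]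
  have h₂ : (q - z₂)⁻¹ * ((q - z₂) / (z₁ - z₂)) = -(z₂ - z₁)⁻¹ := by
    rw [div_eq_mul_inv, inv_mul_cancel_left₀ (sub_ne_zero.2 hq₂), ← inv_neg, neg_sub]
  rw [smul_smul, smul_smul, h₁, h₂, neg_smul, ← sub_eq_add_neg, smul_sub, add_sub_assoc]

variable {A B : Matrix (Fin 2) (Fin 2) K} (L₀ : Matrix (Fin 2) (Fin 2) K)

theorem det_two_pole_mul (hA : A.det = 0) (hB : B.det = 0) {z : K} (hz₁ : z ≠ z₁) (hz₂ : z ≠ z₂) :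
    (L₀ + (z - z₁)⁻¹ • A + (z - z₂)⁻¹ • B).det * (z - z₁) * (z - z₂) =
      L₀.det * (z - z₁) * (z - z₂) + (L₀.adjugate * A).trace * (z - z₂)
        + (L₀.adjugate * B).trace * (z - z₁) + (A.adjugate * B).trace := by
  rw [det_add_smul_add_smul_fin_two hA hB]
  field_simp [sub_ne_zero.2 hz₁, sub_ne_zero.2 hz₂]

theorem det_two_pole_mul_eq (hA : A.det = 0) (hB : B.det = 0) {ζ₁ ζ₂ : K} (hL₀ : L₀.det ≠ 0)
    (htr : (L₀⁻¹ * (A + B)).trace = (z₁ - ζ₁) + (z₂ - ζ₂)) (hq₁ : q ≠ z₁) (hq₂ : q ≠ z₂)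
    (hq : (L₀ + (q - z₁)⁻¹ • A + (q - z₂)⁻¹ • B).det * (q - z₁) * (q - z₂) =
      L₀.det * (q - ζ₁) * (q - ζ₂))
    {z : K} (hz₁ : z ≠ z₁) (hz₂ : z ≠ z₂) :
    (L₀ + (z - z₁)⁻¹ • A + (z - z₂)⁻¹ • B).det * (z - z₁) * (z - z₂) =
      L₀.det * (z - ζ₁) * (z - ζ₂) := by
  have hadj : (L₀.adjugate * A).trace + (L₀.adjugate * B).trace =
      L₀.det * ((z₁ - ζ₁) + (z₂ - ζ₂)) := by
    rw [← htr, inv_def, Ring.inverse_eq_inv', smul_mul, trace_smul, smul_eq_mul,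
      mul_inv_cancel_left₀ hL₀, ← trace_add, Matrix.mul_add]
  rw [det_two_pole_mul L₀ hA hB hq₁ hq₂] at hq
  rw [det_two_pole_mul L₀ hA hB hz₁ hz₂]
  linear_combination hq + (z - q) * hadj

end TwoPoles

/-- The explicit `2×2` matrix `L(z)` built from the rank-one matrices `L₁, L₂`
has spectral coordinates `(q, p)` and type `(z₁, z₂; ζ₁, ζ₂; ρ₁, ρ₂; k₁, k₂)`. -/
theorem additive_representation_spectral_coordinates
    (z₁ z₂ ζ₁ ζ₂ ρ₁ ρ₂ k₁ k₂ p q : ℂ)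
    (hz : z₁ ≠ z₂) (hρ₁ : ρ₁ ≠ 0) (hρ₂ : ρ₂ ≠ 0) (hp : p ≠ 0)
    (hq₁ : q ≠ z₁) (hq₂ : q ≠ z₂)
    (hk : k₁ + k₂ = (z₁ - ζ₁) + (z₂ - ζ₂))
    (L₀ L₁ L₂ : Matrix (Fin 2) (Fin 2) ℂ)
    (hL₀ : L₀ = !![ρ₁, 0; 0, ρ₂])
    (hL₁ : L₁ = ((q - z₁) / (z₂ - z₁)) •
      (!![(1 : ℂ); ρ₂ * (q - z₂ + k₂) - ρ₁ * ρ₂ * (q - ζ₁) / p] *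
       !![ρ₁ * (q - z₂ + k₁) - p * (q - z₂) * (q - ζ₂) / (q - z₁), 1]))
    (hL₂ : L₂ = ((q - z₂) / (z₁ - z₂)) •
      (!![(1 : ℂ); ρ₂ * (q - z₁ + k₂) - ρ₁ * ρ₂ * (q - z₁) * (q - ζ₁) / (p * (q - z₂))] *
       !![ρ₁ * (q - z₁ + k₁) - p * (q - ζ₂), 1]))
    (L : ℂ → Matrix (Fin 2) (Fin 2) ℂ)
    (hL : ∀ z, L z = L₀ + (z - z₁)⁻¹ • L₁ + (z - z₂)⁻¹ • L₂) :
    (L q) 0 1 = 0 ∧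
    (q - z₁) * (L q) 0 0 = p * (q - ζ₂) ∧
    ((L₀⁻¹ * (L₁ + L₂)) 0 0 = k₁ ∧ (L₀⁻¹ * (L₁ + L₂)) 1 1 = k₂) ∧
    (∀ z : ℂ, z ≠ z₁ → z ≠ z₂ →
      (L z).det * (z - z₁) * (z - z₂) = ρ₁ * ρ₂ * (z - ζ₁) * (z - ζ₂)) := by
  have hLq := hL q
  rw [hL₁, hL₂, add_inv_smul_div_smul_add hq₁ hq₂, hL₀, col_mul_row_fin_two,
    col_mul_row_fin_two] at hLq
  have hLq₀₁ : L q 0 1 = 0 := by simp [hLq]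
  have hLq₀₀ : (q - z₁) * L q 0 0 = p * (q - ζ₂) := by
    simp only [hLq, Matrix.add_apply, Matrix.smul_apply, Matrix.sub_apply, of_apply, cons_val_zero,
      smul_eq_mul]
    field_simp
    ring
  have hLq₁₁ : p * (q - z₂) * L q 1 1 = ρ₁ * ρ₂ * (q - ζ₁) := by
    simp only [hLq, Matrix.add_apply, Matrix.smul_apply, Matrix.sub_apply, of_apply, cons_val_one,
      cons_val_zero, smul_eq_mul]
    field_simp
    ring
  have hc₀₀ : (L₀⁻¹ * (L₁ + L₂)) 0 0 = k₁ := by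
    simp only [hL₀, inv_diag_fin_two hρ₁ hρ₂, diagonal_mul, hL₁, hL₂, col_mul_row_fin_two,
      Matrix.add_apply, Matrix.smul_apply, of_apply, cons_val_zero, smul_eq_mul]
    field_simp
    ring
  have hc₁₁ : (L₀⁻¹ * (L₁ + L₂)) 1 1 = k₂ := by
    simp only [hL₀, inv_diag_fin_two hρ₁ hρ₂, diagonal_mul, hL₁, hL₂, col_mul_row_fin_two,
      Matrix.add_apply, Matrix.smul_apply, of_apply, cons_val_one, cons_val_zero, smul_eq_mul]
    field_simp
    ring
  refine ⟨hLq₀₁, hLq₀₀, ⟨hc₀₀, hc₁₁⟩, fun z hz₁ hz₂ => ?_⟩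
  have hdetL₀ : L₀.det = ρ₁ * ρ₂ := by simp [hL₀]
  rw [← hdetL₀, hL]
  refine det_two_pole_mul_eq L₀ (hL₁ ▸ det_smul_col_mul_row_fin_two ..)
    (hL₂ ▸ det_smul_col_mul_row_fin_two ..) (hdetL₀ ▸ mul_ne_zero hρ₁ hρ₂)
    (by rw [trace_fin_two, hc₀₀, hc₁₁, hk]) hq₁ hq₂ ?_ hz₁ hz₂
  rw [← hL, det_fin_two, hLq₀₁, hdetL₀]
  refine mul_left_cancel₀ hp ?_
  linear_combination (p * (q - z₂) * L q 1 1) * hLq₀₀ + p * (q - ζ₂) * hLq₁₁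
end
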